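/- arXiv:2408.12869 — 3 statements merged into one kernel-verified Lean document; each statement's English description precedes it below -/
import Mathlib

section
/- Let G be a 2-connected multigraph with spanning tree T, Y ⊆ E(G)∖T non-empty, and (E1,E2) a 2-separation with separating vertices u,w such that P_{u,w}(T) ⊆ E1 and Y ∩ E1 = ∅. Then for each vertex v ∈ V(E1)∖{u,w}, the graph obtained from G by deleting Y and v has at most two connected components; moreover v is Y-splittable if and only if: (1) v is an internal vertex of P_{u,w}(T), (2) Y equals the set of all non-tree edges whose fundamental path contains P_{u,w}(T), (3) both u and w are Y-splittable, and (4) u and w lie in different components of G minus Y and v. -/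
/-- A multigraph on vertex type `V` with edge type `E`: each edge has an
unordered pair of endpoints. -/
structure Multigraph (V E : Type) where
  ends : E → Sym2 V

namespace Multigraph

variable {V E : Type}

/-- Adjacency within the subgraph with edge set `F` and vertex set `S`. -/
def Adj (G : Multigraph V E) (F : Set E) (S : Set V) (a b : V) : Prop :=
  a ∈ S ∧ b ∈ S ∧ ∃ e ∈ F, G.ends e = s(a, b)

/-- Reachability (lying in the same connected component) in the subgraph with
edge set `F` and vertex set `S`. -/
def Reach (G : Multigraph V E) (F : Set E) (S : Set V) : V → V → Prop :=
  Relation.ReflTransGen (G.Adj F S)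

/-- `v` is `Y`-splittable: the auxiliary graph `H^v_Y`, whose vertices are the
connected components of `G` minus the edges `Y` and the vertex `v`, with edges
induced by `Y`-edges between components (loops for `Y`-edges within a
component), is bipartite.  This is expressed by a 2-colouring of the vertices
which is constant on the components of `G^v_Y` and proper on `Y`-edges not
incident to `v`. -/
def Splittable (G : Multigraph V E) (Y : Set E) (v : V) : Prop :=
  ∃ c : V → Bool,
    (∀ a b : V, G.Reach (Set.univ \ Y) {v}ᶜ a b → c a = c b) ∧
    (∀ y ∈ Y, ∀ a b : V, G.ends y = s(a, b) → a ≠ v → b ≠ v → c a ≠ c b)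

/-- `T` is a spanning tree of `G`: the subgraph `(V, T)` is connected and
every edge of `T` is a bridge of it. -/
def IsSpanningTree (G : Multigraph V E) (T : Set E) : Prop :=
  (∀ a b : V, G.Reach T Set.univ a b) ∧
  ∀ f ∈ T, ∃ a b : V, ¬ G.Reach (T \ {f}) Set.univ a b

/-- The set of tree edges lying on the tree path `P_{u,w}(T)` between `u` and
`w`: a tree edge lies on this path iff deleting it separates `u` from `w`. -/
def pathEdges (G : Multigraph V E) (T : Set E) (u w : V) : Set E :=
  {f | f ∈ T ∧ ¬ G.Reach (T \ {f}) Set.univ u w}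

/-- The fundamental path `P_e(T)` of an edge `e` (as a set of tree edges). -/
def fundPath (G : Multigraph V E) (T : Set E) (e : E) : Set E :=
  {f | f ∈ T ∧ ∀ a b : V, G.ends e = s(a, b) → ¬ G.Reach (T \ {f}) Set.univ a b}

/-- `v` lies on the tree path between `u` and `w`. -/
def OnPath (G : Multigraph V E) (T : Set E) (u w v : V) : Prop :=
  v = u ∨ v = w ∨ ¬ G.Reach T {v}ᶜ u w

/-- `v` lies on the fundamental path `P_e(T)` of the edge `e`. -/
def OnFundPath (G : Multigraph V E) (T : Set E) (e : E) (v : V) : Prop :=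
  ∀ a b : V, G.ends e = s(a, b) → G.OnPath T a b v

/-- The vertices covered by an edge set `F`. -/
def verts (G : Multigraph V E) (F : Set E) : Set V :=
  {v | ∃ e ∈ F, v ∈ G.ends e}

/-- `P⁻¹_{u,w}(G,T)`: the non-tree edges whose fundamental path contains the
tree path from `u` to `w`. -/
def Pinv (G : Multigraph V E) (T : Set E) (u w : V) : Set E :=
  {e | e ∉ T ∧ G.pathEdges T u w ⊆ G.fundPath T e}

/-- A multigraph is simple if it has no loops and no parallel edges. -/
def Simple (G : Multigraph V E) : Prop :=
  (∀ e : E, ¬ (G.ends e).IsDiag) ∧ ∀ e f : E, G.ends e = G.ends f → e = f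

/-- A `k`-separation: a partition of the edges into two parts, each of size at
least `k`, whose vertex sets share exactly `k` vertices. -/
def IsSep (G : Multigraph V E) (k : ℕ) (E1 E2 : Set E) : Prop :=
  E1 ∪ E2 = Set.univ ∧ Disjoint E1 E2 ∧ k ≤ E1.ncard ∧ k ≤ E2.ncard ∧
    (G.verts E1 ∩ G.verts E2).ncard = k

/-- Tutte `k`-connectivity: connected and without `ℓ`-separations for
`1 ≤ ℓ < k`. -/
def TutteConnected (G : Multigraph V E) (k : ℕ) : Prop :=
  (∀ a b : V, G.Reach Set.univ Set.univ a b) ∧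
  ∀ l : ℕ, 1 ≤ l → l < k → ¬ ∃ E1 E2 : Set E, G.IsSep l E1 E2

/-- A 2-separation with designated separating vertices `u` and `w`. -/
def IsTwoSep (G : Multigraph V E) (E1 E2 : Set E) (u w : V) : Prop :=
  E1 ∪ E2 = Set.univ ∧ Disjoint E1 E2 ∧ 2 ≤ E1.ncard ∧ 2 ≤ E2.ncard ∧
    u ≠ w ∧ G.verts E1 ∩ G.verts E2 = {u, w}

/-- `v` is an articulation vertex of the subgraph with edge set `F`: after
removing `v` (and its incident edges), some two remaining vertices are
disconnected. -/
def ArticulationVertex (G : Multigraph V E) (F : Set E) (v : V) : Prop :=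
  ∃ a b : V, a ≠ v ∧ b ≠ v ∧ ¬ G.Reach F {v}ᶜ a b

/-- The subgraph on the edge set `E1`, augmented by one new edge `{u, w}`. -/
def augment (G : Multigraph V E) (E1 : Set E) (u w : V) :
    Multigraph V (↥E1 ⊕ Unit) :=
  ⟨Sum.elim (fun e => G.ends e.1) (fun _ => s(u, w))⟩

/-- The edge set `Q` of the intersection of the fundamental paths of all
edges in `Y`. -/
def Qedges (G : Multigraph V E) (T Y : Set E) : Set E :=
  ⋂ y ∈ Y, G.fundPath T y


theorem adj_symm {G : Multigraph V E} {F : Set E} {S : Set V} {a b : V}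
    (h : G.Adj F S a b) : G.Adj F S b a := by
  obtain ⟨ha, hb, e, he, hends⟩ := h
  exact ⟨hb, ha, e, he, by rw [hends, Sym2.eq_swap]⟩

theorem reach_symm {G : Multigraph V E} {F : Set E} {S : Set V} {a b : V}
    (h : G.Reach F S a b) : G.Reach F S b a := by
  induction h with
  | refl => exact .refl
  | tail _ hstep ih => exact Relation.ReflTransGen.head (adj_symm hstep) ih

theorem reach_trans {G : Multigraph V E} {F : Set E} {S : Set V} {a b c : V}
    (h : G.Reach F S a b) (h' : G.Reach F S b c) : G.Reach F S a c :=
  Relation.ReflTransGen.trans h h'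

theorem reach_mono {G : Multigraph V E} {F F' : Set E} {S S' : Set V} {a b : V}
    (hF : F ⊆ F') (hS : S ⊆ S') (h : G.Reach F S a b) : G.Reach F' S' a b := by
  induction h with
  | refl => exact .refl
  | tail _ hstep ih =>
      obtain ⟨hx, hy, e, he, hends⟩ := hstep
      exact ih.tail ⟨hS hx, hS hy, e, hF he, hends⟩

theorem reach_left_mem {G : Multigraph V E} {F : Set E} {S : Set V} {a b : V}
    (h : G.Reach F S a b) (hne : a ≠ b) : a ∈ S := by
  induction h using Relation.ReflTransGen.head_induction_on with
  | refl => exact absurd rfl hne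
  | head hstep _ _ => exact hstep.1

theorem sym2_rep (z : Sym2 V) : ∃ p q : V, z = s(p, q) :=
  z.ind (fun p q => ⟨p, q, rfl⟩)

/-- If the endpoints of `f` are joined in `F \ {f}`, then deleting `f` does not
change reachability. -/
theorem reach_elim_edge {G : Multigraph V E} {F : Set E} {f : E} {p q : V}
    (hpq : G.ends f = s(p, q)) (hr : G.Reach (F \ {f}) Set.univ p q)
    {x y : V} (h : G.Reach F Set.univ x y) : G.Reach (F \ {f}) Set.univ x y := by
  induction h with
  | refl => exact .refl
  | tail _ hstep ih =>
      obtain ⟨_, _, e, he, hends⟩ := hstep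
      by_cases hef : e = f
      · subst hef
        rw [hpq] at hends
        rcases Sym2.eq_iff.1 hends with ⟨h1, h2⟩ | ⟨h1, h2⟩
        · exact ih.trans (h1 ▸ h2 ▸ hr)
        · exact ih.trans (h1 ▸ h2 ▸ reach_symm hr)
      · exact ih.tail ⟨trivial, trivial, e, ⟨he, hef⟩, hends⟩

/-- Every edge of a spanning tree separates its endpoints. -/
theorem bridge_sep {G : Multigraph V E} {T : Set E} (hT : G.IsSpanningTree T)
    {f : E} (hf : f ∈ T) {p q : V} (hpq : G.ends f = s(p, q)) :
    ¬ G.Reach (T \ {f}) Set.univ p q := by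
  intro hr
  obtain ⟨a, b, hab⟩ := hT.2 f hf
  exact hab (reach_elim_edge hpq hr (hT.1 a b))

/-- Every vertex lies on one of the two sides of a tree edge. -/
theorem side_total {G : Multigraph V E} {T : Set E} (hT : G.IsSpanningTree T)
    {f : E} {p q : V} (hpq : G.ends f = s(p, q)) (x : V) :
    G.Reach (T \ {f}) Set.univ x p ∨ G.Reach (T \ {f}) Set.univ x q := by
  have h := hT.1 x p
  induction h using Relation.ReflTransGen.head_induction_on with
  | refl => exact Or.inl .refl
  | @head a c hstep _ ih =>
      obtain ⟨_, _, e, he, hends⟩ := hstep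
      by_cases hef : e = f
      · subst hef
        rw [hpq] at hends
        rcases Sym2.eq_iff.1 hends with ⟨h1, h2⟩ | ⟨h1, h2⟩
        · subst h1; exact Or.inl Relation.ReflTransGen.refl
        · subst h2; exact Or.inr Relation.ReflTransGen.refl
      · rcases ih with h' | h'
        · exact Or.inl (Relation.ReflTransGen.head ⟨trivial, trivial, e, ⟨he, hef⟩, hends⟩ h')
        · exact Or.inr (Relation.ReflTransGen.head ⟨trivial, trivial, e, ⟨he, hef⟩, hends⟩ h')

/-- Walk decomposition at an essential edge `f`. -/
theorem cross_decomp {G : Multigraph V E} {F : Set E} {S : Set V} {f : E} {p q x y : V}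
    (hpq : G.ends f = s(p, q)) (h : G.Reach F S x y)
    (hn : ¬ G.Reach (F \ {f}) S x y) :
    (G.Reach (F \ {f}) S x p ∧ G.Reach (F \ {f}) S q y) ∨
    (G.Reach (F \ {f}) S x q ∧ G.Reach (F \ {f}) S p y) := by
  induction h using Relation.ReflTransGen.head_induction_on with
  | refl => exact absurd Relation.ReflTransGen.refl hn
  | @head a c hstep htail ih =>
      obtain ⟨haS, hcS, e, he, hends⟩ := hstep
      by_cases hef : e = f
      · rw [hef, hpq] at hends
        by_cases hc : G.Reach (F \ {f}) S c y
        · rcases Sym2.eq_iff.1 hends with ⟨h1, h2⟩ | ⟨h1, h2⟩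
          · subst h1; subst h2; exact Or.inl ⟨.refl, hc⟩
          · subst h1; subst h2; exact Or.inr ⟨.refl, hc⟩
        · rcases Sym2.eq_iff.1 hends with ⟨h1, h2⟩ | ⟨h1, h2⟩
          · subst h1; subst h2
            rcases ih hc with ⟨r1, r2⟩ | ⟨r1, r2⟩
            · exact absurd r2 hc
            · exact absurd r2 hn
          · subst h1; subst h2
            rcases ih hc with ⟨r1, r2⟩ | ⟨r1, r2⟩
            · exact absurd r2 hn
            · exact absurd r2 hc
      · by_cases hc : G.Reach (F \ {f}) S c y
        · exact absurd (Relation.ReflTransGen.head ⟨haS, hcS, e, ⟨he, hef⟩, hends⟩ hc) hn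
        · rcases ih hc with ⟨r1, r2⟩ | ⟨r1, r2⟩
          · exact Or.inl ⟨Relation.ReflTransGen.head ⟨haS, hcS, e, ⟨he, hef⟩, hends⟩ r1, r2⟩
          · exact Or.inr ⟨Relation.ReflTransGen.head ⟨haS, hcS, e, ⟨he, hef⟩, hends⟩ r1, r2⟩

/-- Either a walk avoids `v` entirely, or it first touches `v` via some edge. -/
theorem reach_avoid_or_touch {G : Multigraph V E} {F : Set E} {x y v : V}
    (h : G.Reach F Set.univ x y) (hx : x ≠ v) :
    G.Reach F {v}ᶜ x y ∨
      ∃ x' f, G.Reach F {v}ᶜ x x' ∧ f ∈ F ∧ G.ends f = s(x', v) := by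
  revert hx
  induction h using Relation.ReflTransGen.head_induction_on with
  | refl => exact fun _ => Or.inl .refl
  | @head a c hstep htail ih =>
      intro ha
      obtain ⟨_, _, e, he, hends⟩ := hstep
      by_cases hcv : c = v
      · exact Or.inr ⟨a, e, .refl, he, by rw [hends, hcv]⟩
      · rcases ih hcv with h' | ⟨x', f, r, hf, hends'⟩
        · exact Or.inl (Relation.ReflTransGen.head ⟨ha, hcv, e, he, hends⟩ h')
        · exact Or.inr ⟨x', f, Relation.ReflTransGen.head ⟨ha, hcv, e, he, hends⟩ r, hf, hends'⟩

/-- Confinement/escape lemma: a walk starting in `A` either stays in `A`, or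
first exits into `X`, travelling through `A` all the while. -/
theorem escape {G : Multigraph V E} {F F' : Set E} {S A X : Set V} {a b : V}
    (hedge : ∀ x y e, x ∈ A → e ∈ F → x ∈ S → y ∈ S → G.ends e = s(x, y) →
      e ∈ F' ∧ (y ∈ A ∨ y ∈ X))
    (h : G.Reach F S a b) (ha : a ∈ A) :
    (b ∈ A ∧ G.Reach F' A a b) ∨ ∃ t ∈ X, G.Reach F' (A ∪ {t}) a t := by
  revert ha
  induction h using Relation.ReflTransGen.head_induction_on with
  | refl => exact fun hb => Or.inl ⟨hb, .refl⟩
  | @head x c hstep htail ih =>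
      intro hx
      obtain ⟨hxS, hcS, e, he, hends⟩ := hstep
      rcases hedge x c e hx he hxS hcS hends with ⟨heF', hc⟩
      rcases hc with hcA | hcX
      · rcases ih hcA with ⟨hbA, r⟩ | ⟨t, ht, r⟩
        · exact Or.inl ⟨hbA, Relation.ReflTransGen.head ⟨hx, hcA, e, heF', hends⟩ r⟩
        · exact Or.inr ⟨t, ht,
            Relation.ReflTransGen.head ⟨Or.inl hx, Or.inl hcA, e, heF', hends⟩ r⟩
      · exact Or.inr ⟨c, hcX,
          Relation.ReflTransGen.single ⟨Or.inl hx, Or.inr rfl, e, heF', hends⟩⟩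

/-- A Tutte 2-connected multigraph has no cut vertices. -/
theorem no_cutvertex {G : Multigraph V E} [Fintype E]
    (h2 : G.TutteConnected 2) {v a b : V} (ha : a ≠ v) (hb : b ≠ v) :
    G.Reach Set.univ {v}ᶜ a b := by
  by_contra hn
  set C : Set V := {x | x ≠ v ∧ G.Reach Set.univ {v}ᶜ a x} with hC
  have haC : a ∈ C := ⟨ha, .refl⟩
  have hbC : b ∉ C := fun h => hn h.2
  have hCl : ∀ x y : V, x ∈ C → (∃ e : E, G.ends e = s(x, y)) → y = v ∨ y ∈ C := by
    rintro x y hx ⟨e, he⟩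
    by_cases hyv : y = v
    · exact Or.inl hyv
    · exact Or.inr ⟨hyv, hx.2.tail ⟨hx.1, hyv, e, trivial, he⟩⟩
  set EA : Set E := {e | ∃ x ∈ C, x ∈ G.ends e} with hEA
  have hvertsA : ∀ z ∈ G.verts EA, z ∈ C ∨ z = v := by
    rintro z ⟨e, ⟨x, hxC, hxe⟩, hze⟩
    obtain ⟨p, q, hpq⟩ := sym2_rep (G.ends e)
    rw [hpq, Sym2.mem_iff] at hxe hze
    rcases hze with rfl | rfl
    · rcases hxe with rfl | rfl
      · exact Or.inl hxC
      · rcases hCl x z hxC ⟨e, by rw [hpq, Sym2.eq_swap]⟩ with h' | h'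
        · exact Or.inr h'
        · exact Or.inl h'
    · rcases hxe with rfl | rfl
      · rcases hCl x z hxC ⟨e, hpq⟩ with h' | h'
        · exact Or.inr h'
        · exact Or.inl h'
      · exact Or.inl hxC
  have hvertsB : ∀ z ∈ G.verts EAᶜ, z ∉ C := by
    rintro z ⟨e, heB, hze⟩ hzC
    exact heB ⟨z, hzC, hze⟩
  by_cases hAv : ∃ e, e ∈ EA ∧ v ∈ G.ends e
  · by_cases hBv : ∃ e, e ∈ EAᶜ ∧ v ∈ G.ends e
    · -- a genuine 1-separation
      refine h2.2 1 le_rfl one_lt_two ⟨EA, EAᶜ, Set.union_compl_self EA,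
        disjoint_compl_right, ?_, ?_, ?_⟩
      · obtain ⟨e, he, _⟩ := hAv
        exact (Set.ncard_pos (Set.toFinite _)).2 ⟨e, he⟩
      · obtain ⟨e, he, _⟩ := hBv
        exact (Set.ncard_pos (Set.toFinite _)).2 ⟨e, he⟩
      · have : G.verts EA ∩ G.verts EAᶜ = {v} := by
          apply Set.eq_singleton_iff_unique_mem.2
          constructor
          · obtain ⟨e1, he1, hv1⟩ := hAv
            obtain ⟨e2, he2, hv2⟩ := hBv
            exact ⟨⟨e1, he1, hv1⟩, ⟨e2, he2, hv2⟩⟩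
          · rintro z ⟨hz1, hz2⟩
            rcases hvertsA z hz1 with h' | h'
            · exact absurd h' (hvertsB z hz2)
            · exact h'
        rw [this, Set.ncard_singleton]
    · -- all edges at `v` are in `EA`: the walk from `a` can never leave `C ∪ {v}`
      have key : ∀ x y : V, G.Reach Set.univ Set.univ x y → x ∈ C ∨ x = v →
          y ∈ C ∨ y = v := by
        intro x y h hx
        induction h with
        | refl => exact hx
        | @tail p q hp hstep ih =>
            obtain ⟨_, _, e, _, hends⟩ := hstep
            rcases ih with hpC | rfl
            · rcases hCl p q hpC ⟨e, hends⟩ with h' | h'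
              · exact Or.inr h'
              · exact Or.inl h'
            · have heA : e ∈ EA := by
                by_contra heB
                exact hBv ⟨e, heB, by rw [hends]; exact Sym2.mem_mk_left _ _⟩
              obtain ⟨x', hx'C, hx'e⟩ := heA
              rw [hends, Sym2.mem_iff] at hx'e
              rcases hx'e with rfl | rfl
              · exact absurd rfl hx'C.1
              · exact Or.inl hx'C
      rcases key a b (h2.1 a b) (Or.inl haC) with h' | h'
      · exact hbC h'
      · exact hb h'
  · -- no edge at `v` in `EA`: the walk from `a` can never leave `C`
    have key : ∀ x y : V, G.Reach Set.univ Set.univ x y → x ∈ C → y ∈ C := by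
      intro x y h hx
      induction h with
      | refl => exact hx
      | @tail p q hp hstep ih =>
          obtain ⟨_, _, e, _, hends⟩ := hstep
          have hpC := ih
          rcases hCl p q hpC ⟨e, hends⟩ with rfl | h'
          · exact absurd ⟨e, ⟨p, hpC, by rw [hends]; exact Sym2.mem_mk_left _ _⟩,
              by rw [hends]; exact Sym2.mem_mk_right _ _⟩ hAv
          · exact h'
    exact hbC (key a b (h2.1 a b) haC)

theorem pathEdges_symm (G : Multigraph V E) (T : Set E) (u w : V) :
    G.pathEdges T u w = G.pathEdges T w u := by
  ext f
  exact and_congr_right fun _ =>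
    ⟨fun h h' => h (reach_symm h'), fun h h' => h (reach_symm h')⟩

theorem Pinv_symm (G : Multigraph V E) (T : Set E) (u w : V) :
    G.Pinv T u w = G.Pinv T w u := by
  unfold Pinv
  rw [pathEdges_symm]

/-- There is a minimal subset of the spanning tree joining `u` and `w`;
its edges all lie on the tree path from `u` to `w`. -/
theorem exists_min_connector {G : Multigraph V E} [Fintype E] {T : Set E}
    (hT : G.IsSpanningTree T) (u w : V) :
    ∃ m : Set E, m ⊆ T ∧ G.Reach m Set.univ u w ∧
      (∀ f ∈ m, ¬ G.Reach (m \ {f}) Set.univ u w) ∧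
      ∀ f ∈ m, f ∈ G.pathEdges T u w := by
  have hfin : WellFounded ((· < ·) : Set E → Set E → Prop) := wellFounded_lt
  obtain ⟨m, hm, hmin⟩ := hfin.has_min
    {s : Set E | s ⊆ T ∧ G.Reach s Set.univ u w} ⟨T, le_refl T, hT.1 u w⟩
  obtain ⟨hmT, hmR⟩ := hm
  have hdel : ∀ f ∈ m, ¬ G.Reach (m \ {f}) Set.univ u w := by
    intro f hf hr
    exact hmin (m \ {f}) ⟨(Set.diff_subset).trans hmT, hr⟩
      (Set.sdiff_singleton_ssubset.2 hf)
  refine ⟨m, hmT, hmR, hdel, ?_⟩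
  intro f hf
  obtain ⟨p, q, hpq⟩ := sym2_rep (G.ends f)
  refine ⟨hmT hf, fun hr => ?_⟩
  have hd := cross_decomp hpq hmR (hdel f hf)
  have hb := bridge_sep hT (hmT hf) hpq
  have mono : ∀ {x y : V}, G.Reach (m \ {f}) Set.univ x y →
      G.Reach (T \ {f}) Set.univ x y :=
    fun h => reach_mono (Set.diff_subset_diff_left hmT) (le_refl _) h
  rcases hd with ⟨r1, r2⟩ | ⟨r1, r2⟩
  · exact hb ((reach_symm (mono r1)).trans (hr.trans (reach_symm (mono r2))))
  · exact hb ((mono r2).trans ((reach_symm hr).trans (mono r1)))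

/-- The key tree lemma: if `v` separates `u` from `w` in `T` and every tree
edge separating `u` from `w` also separates `a` from `b`, then (avoiding `v`)
`a` and `b` are tree-connected to `u` and `w` in some order. -/
theorem pinv_sides {G : Multigraph V E} {T m : Set E} {u w v a b : V}
    (hT : G.IsSpanningTree T) (hmT : m ⊆ T) (hmR : G.Reach m Set.univ u w)
    (h1 : ¬ G.Reach T {v}ᶜ u w) (hvu : v ≠ u) (hvw : v ≠ w)
    (hab : ∀ f ∈ m, ¬ G.Reach (T \ {f}) Set.univ a b) :
    (G.Reach T {v}ᶜ a u ∧ G.Reach T {v}ᶜ b w) ∨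
    (G.Reach T {v}ᶜ a w ∧ G.Reach T {v}ᶜ b u) := by
  have hmono : ∀ {x y : V}, G.Reach m {v}ᶜ x y → G.Reach T {v}ᶜ x y :=
    fun h => reach_mono hmT (le_refl _) h
  obtain ⟨u', fu, ru, hfu, hendsfu⟩ :
      ∃ u' fu, G.Reach m {v}ᶜ u u' ∧ fu ∈ m ∧ G.ends fu = s(u', v) := by
    rcases reach_avoid_or_touch hmR (Ne.symm hvu) with h' | h'
    · exact absurd (hmono h') h1
    · exact h'
  obtain ⟨w', fw, rw', hfw, hendsfw⟩ :
      ∃ w' fw, G.Reach m {v}ᶜ w w' ∧ fw ∈ m ∧ G.ends fw = s(w', v) := by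
    rcases reach_avoid_or_touch (reach_symm hmR) (Ne.symm hvw) with h' | h'
    · exact absurd (reach_symm (hmono h')) h1
    · exact h'
  have FXu : ¬ G.Reach (T \ {fu}) Set.univ u' v := bridge_sep hT (hmT hfu) hendsfu
  have FXw : ¬ G.Reach (T \ {fw}) Set.univ w' v := bridge_sep hT (hmT hfw) hendsfw
  have key : ∀ (f : E) (x' : V), f ∈ m → G.ends f = s(x', v) →
      ¬ G.Reach (T \ {f}) Set.univ x' v →
      ∀ x, G.Reach (T \ {f}) Set.univ x x' → G.Reach T {v}ᶜ x x' := by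
    intro f x' hf hends FX x hx
    have hxv : x ≠ v := by
      rintro rfl
      exact FX (reach_symm hx)
    rcases reach_avoid_or_touch hx hxv with hok | ⟨x'', f'', r'', hf'', he''⟩
    · exact reach_mono Set.diff_subset (le_refl _) hok
    · have hxv' : G.Reach (T \ {f}) Set.univ x v :=
        (reach_mono (le_refl _) (fun _ _ => trivial) r'').tail
          ⟨trivial, trivial, f'', hf'', he''⟩
      exact absurd ((reach_symm hx).trans hxv') FX
  have keyu : ∀ x, G.Reach (T \ {fu}) Set.univ x u' → G.Reach T {v}ᶜ x u :=
    fun x hx => ((key fu u' hfu hendsfu FXu x hx).trans (reach_symm (hmono ru)))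
  have keyw : ∀ x, G.Reach (T \ {fw}) Set.univ x w' → G.Reach T {v}ᶜ x w :=
    fun x hx => ((key fw w' hfw hendsfw FXw x hx).trans (reach_symm (hmono rw')))
  have habu := hab fu hfu
  have habw := hab fw hfw
  rcases side_total hT hendsfu a with hau | hav
  · rcases side_total hT hendsfu b with hbu | hbv
    · exact absurd (hau.trans (reach_symm hbu)) habu
    · rcases side_total hT hendsfw a with haw | hav2
      · exact absurd ((reach_symm (keyu a hau)).trans (keyw a haw)) h1
      · rcases side_total hT hendsfw b with hbw | hbv2
        · exact Or.inl ⟨keyu a hau, keyw b hbw⟩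
        · exact absurd (hav2.trans (reach_symm hbv2)) habw
  · rcases side_total hT hendsfu b with hbu | hbv
    · rcases side_total hT hendsfw a with haw | hav2
      · exact Or.inr ⟨keyw a haw, keyu b hbu⟩
      · rcases side_total hT hendsfw b with hbw | hbv2
        · exact absurd ((reach_symm (keyu b hbu)).trans (keyw b hbw)) h1
        · exact absurd (hav2.trans (reach_symm hbv2)) habw
    · exact absurd (hav.trans (reach_symm hbv)) habu

/-- Propagation of splittability to the separating vertex `u`. -/
theorem split_transfer {G : Multigraph V E} {T Y E1 E2 : Set E} {u w v : V}
    (hT : G.IsSpanningTree T) (hYT : ∀ y ∈ Y, y ∉ T)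
    (hsep : G.IsTwoSep E1 E2 u w) (hpath : G.pathEdges T u w ⊆ E1)
    (hvE1 : v ∈ G.verts E1) (hvu : v ≠ u) (hvw : v ≠ w)
    (h1 : ¬ G.Reach T {v}ᶜ u w)
    (h4 : ¬ G.Reach (Set.univ \ Y) {v}ᶜ u w)
    (hpe : ∃ f, f ∈ G.pathEdges T u w)
    (hYp : ∀ y ∈ Y, G.pathEdges T u w ⊆ G.fundPath T y)
    (hYE2 : Y ⊆ E2) :
    G.Splittable Y u := by
  classical
  obtain ⟨h12, hdisj, -, -, huw, hver⟩ := hsep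
  set J : Set V := (G.verts E1)ᶜ with hJ
  have hvJ : v ∉ J := fun h => h hvE1
  have huE1 : u ∈ G.verts E1 :=
    ((Set.ext_iff.1 hver u).2 (Set.mem_insert _ _)).1
  have hwE1 : w ∈ G.verts E1 :=
    ((Set.ext_iff.1 hver w).2 (Set.mem_insert_of_mem _ rfl)).1
  have hUJ : u ∉ J := fun h => h huE1
  have hWJ : w ∉ J := fun h => h hwE1
  have edgeJ : ∀ (x : V) (e : E), x ∈ J → x ∈ G.ends e → e ∈ E2 ∧ e ∉ E1 := by
    intro x e hx hxe
    have he1 : e ∉ E1 := fun h => hx ⟨e, h, hxe⟩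
    have : e ∈ E1 ∪ E2 := h12 ▸ Set.mem_univ e
    exact ⟨this.resolve_left he1, he1⟩
  have vertsE2sub : ∀ x ∈ G.verts E2, x ∈ J ∨ x = u ∨ x = w := by
    intro x hx
    by_cases hx1 : x ∈ G.verts E1
    · exact Or.inr ((Set.ext_iff.1 hver x).1 ⟨hx1, hx⟩)
    · exact Or.inl hx1
  have escJ : ∀ a ∈ G.verts E2, ∃ t, (t = u ∨ t = w) ∧
      G.Reach (T \ E1) (J ∪ {t}) a t := by
    intro a haE2
    have hedge : ∀ x y e, x ∈ J → e ∈ T → x ∈ Set.univ → y ∈ Set.univ →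
        G.ends e = s(x, y) → e ∈ T \ E1 ∧ (y ∈ J ∨ y ∈ ({u, w} : Set V)) := by
      intro x y e hx he _ _ hends
      obtain ⟨he2, he1⟩ := edgeJ x e hx (by rw [hends]; exact Sym2.mem_mk_left _ _)
      have hy2 : y ∈ G.verts E2 := ⟨e, he2, by rw [hends]; exact Sym2.mem_mk_right _ _⟩
      rcases vertsE2sub y hy2 with h' | h' | h'
      · exact ⟨⟨he, he1⟩, Or.inl h'⟩
      · exact ⟨⟨he, he1⟩, Or.inr (by rw [h']; exact Set.mem_insert _ _)⟩
      · exact ⟨⟨he, he1⟩, Or.inr (by rw [h']; exact Set.mem_insert_of_mem _ rfl)⟩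
    rcases vertsE2sub a haE2 with haJ | h' | h'
    · rcases escape hedge (hT.1 a u) haJ with ⟨huJ', _⟩ | ⟨t, ht, r⟩
      · exact absurd huJ' hUJ
      · rcases Set.mem_insert_iff.1 ht with h'' | h''
        · exact ⟨t, Or.inl h'', r⟩
        · exact ⟨t, Or.inr h'', r⟩
    · exact ⟨a, Or.inl h', Relation.ReflTransGen.refl⟩
    · exact ⟨a, Or.inr h', Relation.ReflTransGen.refl⟩
  have hTE1Y : T \ E1 ⊆ Set.univ \ Y :=
    fun e he => ⟨trivial, fun hY => hYT e hY he.1⟩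
  have hsubv : ∀ t : V, t ≠ v → (J ∪ {t} : Set V) ⊆ {v}ᶜ := by
    rintro t htv z (hz | rfl)
    · exact fun h => hvJ (h ▸ hz)
    · exact htv
  have hsubu : ∀ t : V, t ≠ u → (J ∪ {t} : Set V) ⊆ {u}ᶜ := by
    rintro t htu z (hz | rfl)
    · exact fun h => hUJ (h ▸ hz)
    · exact htu
  refine ⟨fun z => if G.Reach (Set.univ \ Y) {u}ᶜ z w then false else true, ?_, ?_⟩
  · intro x y hr
    have key : (if G.Reach (Set.univ \ Y) {u}ᶜ x w then false else true) =
        (if G.Reach (Set.univ \ Y) {u}ᶜ y w then false else true) :=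
      if_congr ⟨fun h => (reach_symm hr).trans h, fun h => hr.trans h⟩ rfl rfl
    exact key
  · intro y hy a b hab ha hb
    have haE2 : a ∈ G.verts E2 :=
      ⟨y, hYE2 hy, by rw [hab]; exact Sym2.mem_mk_left _ _⟩
    have hbE2 : b ∈ G.verts E2 :=
      ⟨y, hYE2 hy, by rw [hab]; exact Sym2.mem_mk_right _ _⟩
    obtain ⟨ta, hta, ra⟩ := escJ a haE2
    obtain ⟨tb, htb, rb⟩ := escJ b hbE2
    obtain ⟨f0, hf0⟩ := hpe
    have hf0E1 : f0 ∈ E1 := hpath hf0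
    have monoTf : T \ E1 ⊆ T \ {f0} :=
      fun e he => ⟨he.1, fun h => he.2 (h ▸ hf0E1)⟩
    have ra' : G.Reach (T \ {f0}) Set.univ a ta :=
      reach_mono monoTf (fun _ _ => trivial) ra
    have rb' : G.Reach (T \ {f0}) Set.univ b tb :=
      reach_mono monoTf (fun _ _ => trivial) rb
    have hsepab : ¬ G.Reach (T \ {f0}) Set.univ a b :=
      (hYp y hy hf0).2 a b hab
    have htatb : ta ≠ tb := by
      rintro rfl
      exact hsepab (ra'.trans (reach_symm rb'))
    -- the two main symmetric cases
    have main : ∀ a' b' : V, a' ≠ u → a' ∈ G.verts E2 →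
        G.Reach (T \ E1) (J ∪ {u}) a' u → G.Reach (T \ E1) (J ∪ {w}) b' w →
        ¬ G.Reach (Set.univ \ Y) {u}ᶜ a' w ∧ G.Reach (Set.univ \ Y) {u}ᶜ b' w := by
      intro a' b' ha' haE2' rau rbw
      refine ⟨?_, reach_mono hTE1Y (hsubu w (Ne.symm huw)) rbw⟩
      intro Q
      have haw : a' ≠ w := by
        rintro rfl
        exact h1 (reach_symm (reach_mono Set.diff_subset (hsubv u (Ne.symm hvu)) rau))
      have haJ : a' ∈ J := by
        rcases vertsE2sub a' haE2' with h' | h' | h'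
        · exact h'
        · exact absurd h' ha'
        · exact absurd h' haw
      have hedge2 : ∀ x z e, x ∈ J → e ∈ Set.univ \ Y → x ∈ ({u}ᶜ : Set V) →
          z ∈ ({u}ᶜ : Set V) → G.ends e = s(x, z) →
          e ∈ Set.univ \ Y ∧ (z ∈ J ∨ z ∈ ({w} : Set V)) := by
        intro x z e hx he hxS hzS hends
        obtain ⟨he2, _⟩ := edgeJ x e hx (by rw [hends]; exact Sym2.mem_mk_left _ _)
        have hz2 : z ∈ G.verts E2 := ⟨e, he2, by rw [hends]; exact Sym2.mem_mk_right _ _⟩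
        rcases vertsE2sub z hz2 with h' | h' | h'
        · exact ⟨he, Or.inl h'⟩
        · exact absurd h' hzS
        · exact ⟨he, Or.inr (by rw [h']; rfl)⟩
      rcases escape hedge2 Q haJ with ⟨hwJ', _⟩ | ⟨t, ht, r⟩
      · exact absurd hwJ' hWJ
      · obtain rfl : t = w := ht
        have rAw : G.Reach (Set.univ \ Y) {v}ᶜ a' t :=
          reach_mono (le_refl _) (hsubv t (Ne.symm hvw)) r
        have rAu : G.Reach (Set.univ \ Y) {v}ᶜ a' u :=
          reach_mono hTE1Y (hsubv u (Ne.symm hvu)) rau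
        exact h4 ((reach_symm rAu).trans rAw)
    rcases hta with h1a | h1a <;> rcases htb with h1b | h1b
    · exact absurd (h1a.trans h1b.symm) htatb
    · rw [h1a] at ra
      rw [h1b] at rb
      obtain ⟨hna, hcb⟩ := main a b ha haE2 ra rb
      have key : (if G.Reach (Set.univ \ Y) {u}ᶜ a w then false else true) ≠
          (if G.Reach (Set.univ \ Y) {u}ᶜ b w then false else true) := by
        rw [if_neg hna, if_pos hcb]
        exact fun h => Bool.noConfusion h
      exact key
    · rw [h1a] at ra
      rw [h1b] at rb
      obtain ⟨hnb, hca⟩ := main b a hb hbE2 rb ra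
      have key : (if G.Reach (Set.univ \ Y) {u}ᶜ a w then false else true) ≠
          (if G.Reach (Set.univ \ Y) {u}ᶜ b w then false else true) := by
        rw [if_pos hca, if_neg hnb]
        exact fun h => Bool.noConfusion h
      exact key
    · exact absurd (h1a.trans h1b.symm) htatb

end Multigraph

/-- Reduction along a 2-separation whose `E1`-side (containing the tree path
from `u` to `w`) is disjoint from `Y`: for every vertex
`v ∈ V(E1) ∖ {u, w}`, the graph `G` minus the edges `Y` and the vertex `v`
has at most two connected components; moreover `v` is `Y`-splittable iff
(1) `v` is an internal vertex of `P_{u,w}(T)`, (2) `Y = P⁻¹_{u,w}(G,T)`,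
(3) both `u` and `w` are `Y`-splittable, and (4) `u` and `w` lie in different
components of `G` minus `Y` and `v`. -/
theorem empty_propagation_tree_interior {V E : Type} [Fintype V] [Fintype E]
    (G : Multigraph V E) (h2 : G.TutteConnected 2)
    (T : Set E) (hT : G.IsSpanningTree T)
    (Y : Set E) (hYT : ∀ y ∈ Y, y ∉ T) (hYne : Y.Nonempty)
    (E1 E2 : Set E) (u w : V) (hsep : G.IsTwoSep E1 E2 u w)
    (hpath : G.pathEdges T u w ⊆ E1) (hY1 : Y ∩ E1 = ∅)
    (v : V) (hv : v ∈ G.verts E1) (hvu : v ≠ u) (hvw : v ≠ w) :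
    (∃ a b : V, ∀ z : V, z ≠ v →
        (G.Reach (Set.univ \ Y) {v}ᶜ z a ∨ G.Reach (Set.univ \ Y) {v}ᶜ z b)) ∧
    (G.Splittable Y v ↔
      ((G.OnPath T u w v ∧ v ≠ u ∧ v ≠ w) ∧
        Y = G.Pinv T u w ∧
        (G.Splittable Y u ∧ G.Splittable Y w) ∧
        ¬ G.Reach (Set.univ \ Y) {v}ᶜ u w)) := by
  classical
  open Multigraph in
  have h12 : E1 ∪ E2 = Set.univ := hsep.1
  have huw : u ≠ w := hsep.2.2.2.2.1
  have hver : G.verts E1 ∩ G.verts E2 = {u, w} := hsep.2.2.2.2.2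
  have hYE2 : Y ⊆ E2 := by
    intro e he
    have hmem : e ∈ E1 ∪ E2 := by rw [h12]; trivial
    refine hmem.resolve_left fun h1 => ?_
    exact Set.eq_empty_iff_forall_notMem.1 hY1 e ⟨he, h1⟩
  have huE1 : u ∈ G.verts E1 :=
    ((Set.ext_iff.1 hver u).2 (Set.mem_insert _ _)).1
  have hwE1 : w ∈ G.verts E1 :=
    ((Set.ext_iff.1 hver w).2 (Set.mem_insert_of_mem _ rfl)).1
  have hvE2 : v ∉ G.verts E2 := by
    intro h
    rcases (Set.ext_iff.1 hver v).1 ⟨hv, h⟩ with h' | h'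
    · exact hvu h'
    · exact hvw h'
  set J : Set V := (G.verts E1)ᶜ with hJ
  have hvJ : v ∉ J := fun h => h hv
  have hUJ : u ∉ J := fun h => h huE1
  have hWJ : w ∉ J := fun h => h hwE1
  have edgeJ : ∀ (x : V) (e : E), x ∈ J → x ∈ G.ends e → e ∈ E2 ∧ e ∉ E1 := by
    intro x e hx hxe
    have he1 : e ∉ E1 := fun h => hx ⟨e, h, hxe⟩
    have hmem : e ∈ E1 ∪ E2 := by rw [h12]; trivial
    exact ⟨hmem.resolve_left he1, he1⟩
  have vertsE2sub : ∀ x ∈ G.verts E2, x ∈ J ∨ x = u ∨ x = w := by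
    intro x hx
    by_cases hx1 : x ∈ G.verts E1
    · exact Or.inr ((Set.ext_iff.1 hver x).1 ⟨hx1, hx⟩)
    · exact Or.inl hx1
  have escJ : ∀ a ∈ G.verts E2, ∃ t, (t = u ∨ t = w) ∧
      G.Reach (T \ E1) (J ∪ {t}) a t := by
    intro a haE2
    have hedge : ∀ x y e, x ∈ J → e ∈ T → x ∈ Set.univ → y ∈ Set.univ →
        G.ends e = s(x, y) → e ∈ T \ E1 ∧ (y ∈ J ∨ y ∈ ({u, w} : Set V)) := by
      intro x y e hx he _ _ hends
      obtain ⟨he2, he1⟩ := edgeJ x e hx (by rw [hends]; exact Sym2.mem_mk_left _ _)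
      have hy2 : y ∈ G.verts E2 := ⟨e, he2, by rw [hends]; exact Sym2.mem_mk_right _ _⟩
      rcases vertsE2sub y hy2 with h' | h' | h'
      · exact ⟨⟨he, he1⟩, Or.inl h'⟩
      · exact ⟨⟨he, he1⟩, Or.inr (by rw [h']; exact Set.mem_insert _ _)⟩
      · exact ⟨⟨he, he1⟩, Or.inr (by rw [h']; exact Set.mem_insert_of_mem _ rfl)⟩
    rcases vertsE2sub a haE2 with haJ | h' | h'
    · rcases Multigraph.escape hedge (hT.1 a u) haJ with ⟨huJ', _⟩ | ⟨t, ht, r⟩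
      · exact absurd huJ' hUJ
      · rcases Set.mem_insert_iff.1 ht with h'' | h''
        · exact ⟨t, Or.inl h'', r⟩
        · exact ⟨t, Or.inr h'', r⟩
    · exact ⟨a, Or.inl h', Relation.ReflTransGen.refl⟩
    · exact ⟨a, Or.inr h', Relation.ReflTransGen.refl⟩
  have hTE1Y : T \ E1 ⊆ Set.univ \ Y :=
    fun e he => ⟨trivial, fun hY => hYT e hY he.1⟩
  have hTY : T ⊆ Set.univ \ Y :=
    fun e he => ⟨trivial, fun hY => hYT e hY he⟩
  have hsubv : ∀ t : V, t ≠ v → (J ∪ {t} : Set V) ⊆ {v}ᶜ := by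
    rintro t htv z (hz | rfl)
    · exact fun h => hvJ (h ▸ hz)
    · exact htv
  -- escape through the interior of `E1`
  have escI : ∀ z, z ∈ G.verts E1 → z ≠ u → z ≠ w → z ≠ v →
      ∃ t, (t = u ∨ t = w) ∧ G.Reach (Set.univ \ Y) {v}ᶜ z t := by
    intro z hz1 hzu hzw hzv
    set A : Set V := {x | x ∈ G.verts E1 ∧ x ≠ u ∧ x ≠ w ∧ x ≠ v} with hA
    have hedge : ∀ x y e, x ∈ A → e ∈ Set.univ → x ∈ ({v}ᶜ : Set V) →
        y ∈ ({v}ᶜ : Set V) → G.ends e = s(x, y) →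
        e ∈ Set.univ \ Y ∧ (y ∈ A ∨ y ∈ ({u, w} : Set V)) := by
      intro x y e hx _ _ hyS hends
      have hx2 : x ∉ G.verts E2 := by
        intro h
        rcases (Set.ext_iff.1 hver x).1 ⟨hx.1, h⟩ with h' | h'
        · exact hx.2.1 h'
        · exact hx.2.2.1 h'
      have he2 : e ∉ E2 := fun h =>
        hx2 ⟨e, h, by rw [hends]; exact Sym2.mem_mk_left _ _⟩
      have he1 : e ∈ E1 := by
        have hmem : e ∈ E1 ∪ E2 := by rw [h12]; trivial
        exact hmem.resolve_right he2
      have heY : e ∉ Y := fun h => Set.eq_empty_iff_forall_notMem.1 hY1 e ⟨h, he1⟩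
      have hy1 : y ∈ G.verts E1 := ⟨e, he1, by rw [hends]; exact Sym2.mem_mk_right _ _⟩
      by_cases hyu : y = u
      · exact ⟨⟨trivial, heY⟩, Or.inr (by rw [hyu]; exact Set.mem_insert _ _)⟩
      · by_cases hyw : y = w
        · exact ⟨⟨trivial, heY⟩, Or.inr (by rw [hyw]; exact Set.mem_insert_of_mem _ rfl)⟩
        · exact ⟨⟨trivial, heY⟩, Or.inl ⟨hy1, hyu, hyw, hyS⟩⟩
    have hreach : G.Reach Set.univ {v}ᶜ z u :=
      Multigraph.no_cutvertex h2 hzv (Ne.symm hvu)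
    rcases Multigraph.escape hedge hreach ⟨hz1, hzu, hzw, hzv⟩ with ⟨huA, _⟩ | ⟨t, ht, r⟩
    · exact absurd rfl huA.2.1
    · have htv : t ≠ v := by
        rcases Set.mem_insert_iff.1 ht with h'' | h''
        · exact h'' ▸ Ne.symm hvu
        · exact h'' ▸ Ne.symm hvw
      have hsub : (A ∪ {t} : Set V) ⊆ {v}ᶜ := by
        rintro x (hx | rfl)
        · exact hx.2.2.2
        · exact htv
      have r' : G.Reach (Set.univ \ Y) {v}ᶜ z t := reach_mono (le_refl _) hsub r
      rcases Set.mem_insert_iff.1 ht with h'' | h''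
      · exact ⟨t, Or.inl h'', r'⟩
      · exact ⟨t, Or.inr h'', r'⟩
  have goal1 : ∀ z, z ≠ v →
      G.Reach (Set.univ \ Y) {v}ᶜ z u ∨ G.Reach (Set.univ \ Y) {v}ᶜ z w := by
    intro z hzv
    by_cases hzu : z = u
    · rw [hzu]; exact Or.inl Relation.ReflTransGen.refl
    by_cases hzw : z = w
    · rw [hzw]; exact Or.inr Relation.ReflTransGen.refl
    by_cases hz1 : z ∈ G.verts E1
    · obtain ⟨t, ht, r⟩ := escI z hz1 hzu hzw hzv
      rcases ht with h'' | h''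
      · rw [h''] at r; exact Or.inl r
      · rw [h''] at r; exact Or.inr r
    · by_cases hz2 : z ∈ G.verts E2
      · obtain ⟨t, ht, r⟩ := escJ z hz2
        have htv : t ≠ v := by
          rcases ht with h'' | h''
          · exact h'' ▸ Ne.symm hvu
          · exact h'' ▸ Ne.symm hvw
        have r' : G.Reach (Set.univ \ Y) {v}ᶜ z t :=
          reach_mono hTE1Y (hsubv t htv) r
        rcases ht with h'' | h''
        · rw [h''] at r'; exact Or.inl r'
        · rw [h''] at r'; exact Or.inr r'
      · exfalso
        rcases Relation.ReflTransGen.cases_head (h2.1 z u) with heq | ⟨c, hadj, _⟩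
        · exact hzu heq
        · obtain ⟨_, _, e, _, hends⟩ := hadj
          have hmem : e ∈ E1 ∪ E2 := by rw [h12]; trivial
          rcases hmem with h' | h'
          · exact hz1 ⟨e, h', by rw [hends]; exact Sym2.mem_mk_left _ _⟩
          · exact hz2 ⟨e, h', by rw [hends]; exact Sym2.mem_mk_left _ _⟩
  obtain ⟨m, hmT, hmR, hmdel, hmP⟩ := Multigraph.exists_min_connector hT u w
  have hpe : ∃ f, f ∈ G.pathEdges T u w := by
    rcases Relation.ReflTransGen.cases_head hmR with heq | ⟨c, hadj, _⟩
    · exact absurd heq huw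
    · obtain ⟨_, _, e, he, _⟩ := hadj
      exact ⟨e, hmP e he⟩
  have monoRv : ∀ {x y : V}, G.Reach T {v}ᶜ x y →
      G.Reach (Set.univ \ Y) {v}ᶜ x y :=
    fun h => reach_mono hTY (le_refl _) h
  refine ⟨⟨u, w, fun z hz => goal1 z hz⟩, ?_, ?_⟩
  · -- forward direction
    rintro ⟨c, hconst, hprop⟩
    obtain ⟨y₀, hy₀⟩ := hYne
    obtain ⟨a₀, b₀, hab₀⟩ := Multigraph.sym2_rep (G.ends y₀)
    have ha₀ : a₀ ∈ G.verts E2 :=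
      ⟨y₀, hYE2 hy₀, by rw [hab₀]; exact Sym2.mem_mk_left _ _⟩
    have hb₀ : b₀ ∈ G.verts E2 :=
      ⟨y₀, hYE2 hy₀, by rw [hab₀]; exact Sym2.mem_mk_right _ _⟩
    have ha₀v : a₀ ≠ v := fun h => hvE2 (h ▸ ha₀)
    have hb₀v : b₀ ≠ v := fun h => hvE2 (h ▸ hb₀)
    have h4 : ¬ G.Reach (Set.univ \ Y) {v}ᶜ u w := by
      intro hr
      have d1 : G.Reach (Set.univ \ Y) {v}ᶜ a₀ u := by
        rcases goal1 a₀ ha₀v with h' | h'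
        · exact h'
        · exact h'.trans (reach_symm hr)
      have d2 : G.Reach (Set.univ \ Y) {v}ᶜ b₀ u := by
        rcases goal1 b₀ hb₀v with h' | h'
        · exact h'
        · exact h'.trans (reach_symm hr)
      exact hprop y₀ hy₀ a₀ b₀ hab₀ ha₀v hb₀v (hconst a₀ b₀ (d1.trans (reach_symm d2)))
    have h1' : ¬ G.Reach T {v}ᶜ u w := fun h => h4 (monoRv h)
    have hYsub : Y ⊆ G.Pinv T u w := by
      intro y hy
      refine ⟨hYT y hy, ?_⟩
      intro f hf
      refine ⟨hf.1, ?_⟩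
      intro a b hab hr
      have haE2 : a ∈ G.verts E2 :=
        ⟨y, hYE2 hy, by rw [hab]; exact Sym2.mem_mk_left _ _⟩
      have hbE2 : b ∈ G.verts E2 :=
        ⟨y, hYE2 hy, by rw [hab]; exact Sym2.mem_mk_right _ _⟩
      have hav : a ≠ v := fun h => hvE2 (h ▸ haE2)
      have hbv : b ≠ v := fun h => hvE2 (h ▸ hbE2)
      have hnRv : ¬ G.Reach (Set.univ \ Y) {v}ᶜ a b :=
        fun h => hprop y hy a b hab hav hbv (hconst a b h)
      obtain ⟨ta, hta, ra⟩ := escJ a haE2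
      obtain ⟨tb, htb, rb⟩ := escJ b hbE2
      have htav : ta ≠ v := by
        rcases hta with h'' | h''
        · exact h'' ▸ Ne.symm hvu
        · exact h'' ▸ Ne.symm hvw
      have htbv : tb ≠ v := by
        rcases htb with h'' | h''
        · exact h'' ▸ Ne.symm hvu
        · exact h'' ▸ Ne.symm hvw
      have rva : G.Reach (Set.univ \ Y) {v}ᶜ a ta :=
        reach_mono hTE1Y (hsubv ta htav) ra
      have rvb : G.Reach (Set.univ \ Y) {v}ᶜ b tb :=
        reach_mono hTE1Y (hsubv tb htbv) rb
      have htatb : ta ≠ tb := by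
        rintro rfl
        exact hnRv (rva.trans (reach_symm rvb))
      have hfE1 : f ∈ E1 := hpath hf
      have monoTf : T \ E1 ⊆ T \ {f} :=
        fun e he => ⟨he.1, fun h => he.2 (h ▸ hfE1)⟩
      have ra' : G.Reach (T \ {f}) Set.univ a ta :=
        reach_mono monoTf (fun _ _ => trivial) ra
      have rb' : G.Reach (T \ {f}) Set.univ b tb :=
        reach_mono monoTf (fun _ _ => trivial) rb
      have hrtt : G.Reach (T \ {f}) Set.univ ta tb :=
        (reach_symm ra').trans (hr.trans rb')
      rcases hta with h1a | h1a <;> rcases htb with h1b | h1b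
      · exact htatb (h1a.trans h1b.symm)
      · rw [h1a, h1b] at hrtt
        exact hf.2 hrtt
      · rw [h1a, h1b] at hrtt
        exact hf.2 (reach_symm hrtt)
      · exact htatb (h1a.trans h1b.symm)
    have hPsub : G.Pinv T u w ⊆ Y := by
      rintro e ⟨heT, hePP⟩
      by_contra heY
      obtain ⟨a, b, hab⟩ := Multigraph.sym2_rep (G.ends e)
      have hab_all : ∀ f ∈ m, ¬ G.Reach (T \ {f}) Set.univ a b :=
        fun f hf => (hePP (hmP f hf)).2 a b hab
      rcases Multigraph.pinv_sides hT hmT hmR h1' hvu hvw hab_all with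
        ⟨rau, rbw⟩ | ⟨raw, rbu⟩
      · have hav : a ≠ v := by
          rintro rfl
          exact (Multigraph.reach_left_mem rau hvu) rfl
        have hbv : b ≠ v := by
          rintro rfl
          exact (Multigraph.reach_left_mem rbw hvw) rfl
        have hadj : G.Reach (Set.univ \ Y) {v}ᶜ a b :=
          Relation.ReflTransGen.single ⟨hav, hbv, e, ⟨trivial, heY⟩, hab⟩
        exact h4 ((reach_symm (monoRv rau)).trans (hadj.trans (monoRv rbw)))
      · have hav : a ≠ v := by
          rintro rfl
          exact (Multigraph.reach_left_mem raw hvw) rfl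
        have hbv : b ≠ v := by
          rintro rfl
          exact (Multigraph.reach_left_mem rbu hvu) rfl
        have hadj : G.Reach (Set.univ \ Y) {v}ᶜ a b :=
          Relation.ReflTransGen.single ⟨hav, hbv, e, ⟨trivial, heY⟩, hab⟩
        exact h4 ((reach_symm (monoRv rbu)).trans
          ((reach_symm hadj).trans (monoRv raw)))
    have hYP : Y = G.Pinv T u w := Set.Subset.antisymm hYsub hPsub
    have h3u : G.Splittable Y u :=
      Multigraph.split_transfer hT hYT hsep hpath hv hvu hvw h1' h4 hpe
        (fun y hy => (hYsub hy).2) hYE2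
    have h3w : G.Splittable Y w := by
      have hsep' : G.IsTwoSep E1 E2 w u :=
        ⟨hsep.1, hsep.2.1, hsep.2.2.1, hsep.2.2.2.1, huw.symm,
          hver.trans (Set.pair_comm u w)⟩
      have hpath' : G.pathEdges T w u ⊆ E1 := by
        rw [← Multigraph.pathEdges_symm]; exact hpath
      have hpe' : ∃ f, f ∈ G.pathEdges T w u := by
        rw [← Multigraph.pathEdges_symm]; exact hpe
      exact Multigraph.split_transfer hT hYT hsep' hpath' hv hvw hvu
        (fun h => h1' (reach_symm h)) (fun h => h4 (reach_symm h)) hpe'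
        (fun y hy => by
          rw [← Multigraph.pathEdges_symm]; exact (hYsub hy).2) hYE2
    exact ⟨⟨Or.inr (Or.inr h1'), hvu, hvw⟩, hYP, ⟨h3u, h3w⟩, h4⟩
  · -- reverse direction
    rintro ⟨⟨hOn, -, -⟩, hYP, -, h4⟩
    have h1' : ¬ G.Reach T {v}ᶜ u w := (hOn.resolve_left hvu).resolve_left hvw
    refine ⟨fun z => if G.Reach (Set.univ \ Y) {v}ᶜ z u then true else false, ?_, ?_⟩
    · intro x y hr
      have key : (if G.Reach (Set.univ \ Y) {v}ᶜ x u then true else false) =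
          (if G.Reach (Set.univ \ Y) {v}ᶜ y u then true else false) :=
        if_congr ⟨fun h => (reach_symm hr).trans h, fun h => hr.trans h⟩ rfl rfl
      exact key
    · intro y hy a b hab hav hbv
      have hyP : y ∈ G.Pinv T u w := hYP ▸ hy
      have hab_all : ∀ f ∈ m, ¬ G.Reach (T \ {f}) Set.univ a b :=
        fun f hf => (hyP.2 (hmP f hf)).2 a b hab
      rcases Multigraph.pinv_sides hT hmT hmR h1' hvu hvw hab_all with
        ⟨rau, rbw⟩ | ⟨raw, rbu⟩
      · have hA : G.Reach (Set.univ \ Y) {v}ᶜ a u := monoRv rau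
        have hB : ¬ G.Reach (Set.univ \ Y) {v}ᶜ b u :=
          fun h => h4 ((reach_symm h).trans (monoRv rbw))
        have key : (if G.Reach (Set.univ \ Y) {v}ᶜ a u then true else false) ≠
            (if G.Reach (Set.univ \ Y) {v}ᶜ b u then true else false) := by
          rw [if_pos hA, if_neg hB]
          exact fun h => Bool.noConfusion h
        exact key
      · have hA : ¬ G.Reach (Set.univ \ Y) {v}ᶜ a u :=
          fun h => h4 ((reach_symm h).trans (monoRv raw))
        have hB : G.Reach (Set.univ \ Y) {v}ᶜ b u := monoRv rbu
        have key : (if G.Reach (Set.univ \ Y) {v}ᶜ a u then true else false) ≠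
            (if G.Reach (Set.univ \ Y) {v}ᶜ b u then true else false) := by
          rw [if_neg hA, if_pos hB]
          exact fun h => Bool.noConfusion h
        exact key
end

section
/- Let G be a 3-connected graph with spanning tree T and non-empty Y ⊆ E(G)∖T, and let Q := ⋂_{y∈Y} P_y(T) be the intersection of the fundamental paths of all Y-edges. Then any two inner vertices of Q that are articulation vertices of G minus Y must be adjacent on Q; in particular there are at most two such inner vertices. -/
namespace Multigraph

/-- `v` is an inner vertex of the path `Q = ⋂_{y∈Y} P_y(T)`: it lies on every
fundamental path `P_y(T)` and is incident to two distinct edges of `Q`. -/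
def InnerQ {V E : Type} (G : Multigraph V E) (T Y : Set E) (v : V) : Prop :=
  (∀ y ∈ Y, G.OnFundPath T y v) ∧
  ∃ f ∈ G.Qedges T Y, ∃ g ∈ G.Qedges T Y,
    f ≠ g ∧ v ∈ G.ends f ∧ v ∈ G.ends g

end Multigraph

/-!
Let `a` be an inner vertex of `Q` with `Q`-edges `aa₁` and `aa₂`. Deleting `a` from `T` separates
`a₁` from `a₂`, and since every fundamental path `P_y(T)` uses both `aa₁` and `aa₂`, every `Y`-edge
joins the `a₁`-side to the `a₂`-side. As `G - a` is connected, `a` can only be an articulation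
vertex of `G ∖ Y` if `a₁` and `a₂` are separated in `G ∖ Y - a`.

Let `b` be a second such vertex, lying (in `T - a`) on the side of `a₂`, with `a` on the side of
`b₁`, and suppose `ab` is not an edge of `Q`. The vertices joined to `b` in `G ∖ Y - a` and to `a`
in `G ∖ Y - b` include `a₂` and `b₁` but neither `a₁`, `b₂` nor any endpoint of a `Y`-edge, so the
edges meeting them form one side of a 2-separation of `G` with separator `{a, b}`. Finally, three
pairwise adjacent vertices of `Q` would span a triangle in `T`.
-/

namespace Multigraph

variable {V E : Type} {G : Multigraph V E} {F F' T Y : Set E} {S S' M K U : Set V}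
  {a a₁ a₂ b b₁ b₂ c u v w x x' p q : V} {e f g h y : E} {j k : ℕ}

theorem Adj.symm (h : G.Adj F S u w) : G.Adj F S w u :=
  ⟨h.2.1, h.1, h.2.2.imp fun _ he => ⟨he.1, he.2.trans Sym2.eq_swap⟩⟩

theorem Adj.reach (h : G.Adj F S u w) : G.Reach F S u w :=
  Relation.ReflTransGen.single h

theorem Reach.trans (h₁ : G.Reach F S u v) (h₂ : G.Reach F S v w) : G.Reach F S u w :=
  Relation.ReflTransGen.trans h₁ h₂

theorem Reach.symm (h : G.Reach F S u w) : G.Reach F S w u := by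
  induction h with
  | refl => exact .refl
  | tail _ hcd ih => exact ih.head hcd.symm

theorem Reach.mono (hF : F ⊆ F') (hS : S ⊆ S') (h : G.Reach F S u w) : G.Reach F' S' u w := by
  induction h with
  | refl => exact .refl
  | tail _ hcd ih => exact ih.tail ⟨hS hcd.1, hS hcd.2.1, hcd.2.2.imp fun _ he => ⟨hF he.1, he.2⟩⟩

theorem Reach.mem (h : G.Reach F S u w) (hu : u ∈ S) : w ∈ S := by
  induction h with
  | refl => exact hu
  | tail _ hcd _ => exact hcd.2.1

theorem Reach.avoid (h : G.Reach F S u w) (hv : ¬ G.Reach F S u v) :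
    G.Reach F (S ∩ {v}ᶜ) u w := by
  induction h with
  | refl => exact .refl
  | @tail c d hc hcd ih =>
    refine ih.tail ⟨⟨hcd.1, ?_⟩, ⟨hcd.2.1, ?_⟩, hcd.2.2⟩
    · rintro rfl; exact hv hc
    · rintro rfl; exact hv (hc.tail hcd)

theorem Reach.diff_singleton (hvf : v ∈ G.ends f) (hv : v ∉ S) (h : G.Reach F S u w) :
    G.Reach (F \ {f}) S u w := by
  induction h with
  | refl => exact .refl
  | @tail c d _ hcd ih =>
    obtain ⟨hc, hd, e, he, hee⟩ := hcd
    refine ih.tail ⟨hc, hd, e, ⟨he, ?_⟩, hee⟩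
    rintro rfl
    rw [hee, Sym2.mem_iff] at hvf
    rcases hvf with rfl | rfl <;> contradiction

theorem Reach.diff_singleton_or (hf : G.ends f = s(p, q)) (h : G.Reach F S u w) :
    G.Reach (F \ {f}) S u w ∨ G.Reach (F \ {f}) S p w ∨ G.Reach (F \ {f}) S q w := by
  induction h with
  | refl => exact .inl .refl
  | @tail c d _ hcd ih =>
    obtain ⟨hc, hd, e, he, hee⟩ := hcd
    by_cases hef : e = f
    · subst hef
      rcases Sym2.eq_iff.mp (hee.symm.trans hf) with ⟨-, rfl⟩ | ⟨-, rfl⟩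
      exacts [.inr (.inr .refl), .inr (.inl .refl)]
    · have hcd : G.Adj (F \ {f}) S c d := ⟨hc, hd, e, ⟨he, hef⟩, hee⟩
      rcases ih with ih | ih | ih
      exacts [.inl (ih.tail hcd), .inr (.inl (ih.tail hcd)), .inr (.inr (ih.tail hcd))]

theorem Reach.exists_adj_boundary (h : G.Reach F S u w) (hu : u ∈ U) (hw : w ∉ U) :
    ∃ v ∈ U, ∃ v' ∉ U, G.Adj F S v v' := by
  induction h with
  | refl => exact absurd hu hw
  | @tail c d _ hcd ih =>
    by_cases hc : c ∈ U
    · exact ⟨c, hc, d, hw, hcd⟩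
    · exact ih hc

/-- The path from `u` to the neighbour `c` of `a` avoids `b`; then the edge `ca` leads to `a`. -/
theorem Reach.reach_compl_of_not_reach (hu : G.Reach F {a}ᶜ u c) (hb : ¬ G.Reach F {a}ᶜ b c)
    (hf : f ∈ F) (hfe : G.ends f = s(a, c)) (hab : a ≠ b) : G.Reach F {b}ᶜ u a := by
  have hcb : c ≠ b := by rintro rfl; exact hb .refl
  exact ((hu.avoid fun hub => hb (hub.symm.trans hu)).mono subset_rfl Set.inter_subset_right).tail
    ⟨hcb, hab, f, hf, hfe.trans Sym2.eq_swap⟩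

namespace IsSpanningTree

theorem reach_diff_or (hT : G.IsSpanningTree T) (hfe : G.ends f = s(p, q)) (u : V) :
    G.Reach (T \ {f}) Set.univ u p ∨ G.Reach (T \ {f}) Set.univ u q := by
  rcases (hT.1 p u).diff_singleton_or hfe with h | h | h
  exacts [.inl h.symm, .inl h.symm, .inr h.symm]

theorem not_reach_diff (hT : G.IsSpanningTree T) (hf : f ∈ T) (hfe : G.ends f = s(p, q)) :
    ¬ G.Reach (T \ {f}) Set.univ p q := by
  intro hpq
  obtain ⟨u, w, huw⟩ := hT.2 f hf
  have hp : ∀ z, G.Reach (T \ {f}) Set.univ z p := fun z =>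
    (hT.reach_diff_or hfe z).elim id fun h => h.trans hpq.symm
  exact huw ((hp u).trans (hp w).symm)

theorem reach_compl_of_not_reach_diff (hT : G.IsSpanningTree T) (hfe : G.ends f = s(a, c))
    (hxx' : ¬ G.Reach (T \ {f}) Set.univ x x') :
    G.Reach T {a}ᶜ x c ∨ G.Reach T {a}ᶜ x' c := by
  have side : ∀ {z z'}, G.Reach (T \ {f}) Set.univ z c → G.Reach (T \ {f}) Set.univ z' a →
      ¬ G.Reach (T \ {f}) Set.univ z z' → G.Reach T {a}ᶜ z c := fun hz hz' hzz' =>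
    (hz.avoid fun hza => hzz' (hza.trans hz'.symm)).mono Set.sdiff_subset Set.inter_subset_right
  rcases hT.reach_diff_or hfe x with hx | hx <;> rcases hT.reach_diff_or hfe x' with hx' | hx'
  · exact absurd (hx.trans hx'.symm) hxx'
  · exact .inr (side hx' hx fun h => hxx' h.symm)
  · exact .inl (side hx hx' hxx')
  · exact absurd (hx.trans hx'.symm) hxx'

theorem not_triangle (hT : G.IsSpanningTree T) (hf : f ∈ T) (hg : g ∈ T) (hh : h ∈ T)
    (hfe : G.ends f = s(u, v)) (hge : G.ends g = s(v, w)) (hhe : G.ends h = s(u, w))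
    (huv : u ≠ v) (hvw : v ≠ w) : False := by
  have hfh : f ≠ h := by
    rintro rfl
    rcases Sym2.eq_iff.mp (hfe.symm.trans hhe) with ⟨-, h⟩ | ⟨-, h⟩
    exacts [hvw h, huv h.symm]
  have hgh : g ≠ h := by
    rintro rfl
    rcases Sym2.eq_iff.mp (hge.symm.trans hhe) with ⟨h, -⟩ | ⟨h, -⟩
    exacts [huv h.symm, hvw h]
  have huv' : G.Adj (T \ {h}) Set.univ u v := ⟨trivial, trivial, f, ⟨hf, hfh⟩, hfe⟩
  have hvw' : G.Adj (T \ {h}) Set.univ v w := ⟨trivial, trivial, g, ⟨hg, hgh⟩, hge⟩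
  exact hT.not_reach_diff hh hhe (huv'.reach.trans hvw'.reach)

end IsSpanningTree

def star (G : Multigraph V E) (M : Set V) : Set E :=
  {e | ∃ v ∈ M, v ∈ G.ends e}

theorem mem_star (hee : G.ends e = s(v, w)) (hw : w ∈ M) : e ∈ G.star M :=
  ⟨w, hw, hee ▸ Sym2.mem_mk_right v w⟩

theorem notMem_star (hee : G.ends e = s(v, w)) (hv : v ∉ M) (hw : w ∉ M) : e ∉ G.star M := by
  rintro ⟨u, hu, hue⟩
  rw [hee, Sym2.mem_iff] at hue
  rcases hue with rfl | rfl <;> contradiction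

theorem verts_star_inter_subset (hcl : ∀ e v w, G.ends e = s(v, w) → v ∈ M → w ∈ M ∪ K) :
    G.verts (G.star M) ∩ G.verts (G.star M)ᶜ ⊆ K := by
  rintro v ⟨⟨e, ⟨u, hu, hue⟩, hve⟩, ⟨e', he', hve'⟩⟩
  have hvM : v ∉ M := fun hv => he' ⟨v, hv, hve'⟩
  obtain ⟨w, hw⟩ := Sym2.mem_iff_exists.mp hue
  rw [hw, Sym2.mem_iff] at hve
  rcases hve with rfl | rfl
  · exact absurd hu hvM
  · exact (hcl e u _ hw hu).resolve_left hvM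

namespace TutteConnected

theorem mono (hG : G.TutteConnected k) (hjk : j ≤ k) : G.TutteConnected j :=
  ⟨hG.1, fun l hl hlj => hG.2 l hl (hlj.trans_le hjk)⟩

theorem not_closed_separation (hG : G.TutteConnected k)
    (hcl : ∀ e v w, G.ends e = s(v, w) → v ∈ M → w ∈ M ∪ K)
    (hK : K ⊆ G.verts (G.star M) ∩ G.verts (G.star M)ᶜ) (hK₁ : 1 ≤ K.ncard) (hKk : K.ncard < k)
    (hM : K.ncard ≤ (G.star M).ncard) (hMc : K.ncard ≤ (G.star M)ᶜ.ncard) : False :=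
  hG.2 K.ncard hK₁ hKk ⟨G.star M, (G.star M)ᶜ, Set.union_compl_self _, disjoint_compl_right, hM,
    hMc, congrArg Set.ncard ((verts_star_inter_subset hcl).antisymm hK)⟩

/-- The component `M` of `p` in `G - a` is closed up to `a`; a path from `p` to `q` leaves `M`
through `a`, and one from `q` enters `M ∪ {a}` through `a`, so `a` alone separates. -/
theorem reach_compl_singleton [Finite E] (hG : G.TutteConnected 2) (hp : p ≠ a) (hq : q ≠ a) :
    G.Reach Set.univ {a}ᶜ p q := by
  by_contra hpq
  set M := {v | G.Reach Set.univ {a}ᶜ p v}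
  have haM : a ∉ M := fun h => Reach.mem h hp rfl
  have hcl : ∀ e v w, G.ends e = s(v, w) → v ∈ M → w ∈ M ∪ {a} := by
    intro e v w hee hv
    by_cases hw : w = a
    · exact .inr hw
    · exact .inl (Relation.ReflTransGen.tail hv ⟨Reach.mem hv hp, hw, e, trivial, hee⟩)
  obtain ⟨v, hv, v', hv', -, -, e, -, hee⟩ :=
    (hG.1 p q).exists_adj_boundary (U := M) .refl hpq
  obtain ⟨w, hw, w', hw', -, -, e', -, hee'⟩ :=
    (hG.1 q p).exists_adj_boundary (U := (M ∪ {a})ᶜ) (by rintro (h | h); exacts [hpq h, hq h])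
      (Set.notMem_compl_iff.mpr (.inl .refl))
  obtain rfl : v' = a := (hcl e v v' hee hv).resolve_left hv'
  obtain rfl : w' = v' := (Set.notMem_compl_iff.mp hw').resolve_left fun h =>
    hw (hcl e' w' w (hee'.trans Sym2.eq_swap) h)
  have he : e ∈ G.star M := mem_star (hee.trans Sym2.eq_swap) hv
  have he' : e' ∉ G.star M := notMem_star hee' (fun h => hw (.inl h)) haM
  refine hG.not_closed_separation hcl ?_ (by simp) (by simp) ?_ ?_
  · rintro _ rfl
    exact ⟨⟨e, he, hee ▸ Sym2.mem_mk_right _ _⟩, ⟨e', he', hee' ▸ Sym2.mem_mk_right _ _⟩⟩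
  · rw [Set.ncard_singleton]
    exact (Set.ncard_pos (Set.toFinite _)).mpr ⟨e, he⟩
  · rw [Set.ncard_singleton]
    exact (Set.ncard_pos (Set.toFinite _)).mpr ⟨e', he'⟩

end TutteConnected

theorem qedges_subset (hY : Y.Nonempty) : G.Qedges T Y ⊆ T := fun _ hf =>
  (Set.mem_iInter₂.mp hf hY.some hY.some_mem).1

structure IsInnerSplit (G : Multigraph V E) (T Y : Set E) (a a₁ a₂ : V) : Prop where
  edge₁ : ∃ f ∈ T ∩ G.Qedges T Y, G.ends f = s(a, a₁)
  edge₂ : ∃ f ∈ T ∩ G.Qedges T Y, G.ends f = s(a, a₂)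
  not_reach : ¬ G.Reach T {a}ᶜ a₁ a₂
  sides : ∀ y ∈ Y, ∀ x x', G.ends y = s(x, x') →
    G.Reach T {a}ᶜ x a₁ ∧ G.Reach T {a}ᶜ x' a₂ ∨ G.Reach T {a}ᶜ x a₂ ∧ G.Reach T {a}ᶜ x' a₁

structure IsArticulationSplit (G : Multigraph V E) (T Y : Set E) (a a₁ a₂ : V) : Prop
    extends G.IsInnerSplit T Y a a₁ a₂ where
  not_reach_compl : ¬ G.Reach (Set.univ \ Y) {a}ᶜ a₁ a₂

theorem IsInnerSplit.swap (hs : G.IsInnerSplit T Y a a₁ a₂) : G.IsInnerSplit T Y a a₂ a₁ :=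
  ⟨hs.edge₂, hs.edge₁, fun h => hs.not_reach h.symm,
    fun y hy x x' hxy => (hs.sides y hy x x' hxy).symm⟩

theorem IsArticulationSplit.swap (hs : G.IsArticulationSplit T Y a a₁ a₂) :
    G.IsArticulationSplit T Y a a₂ a₁ :=
  ⟨hs.toIsInnerSplit.swap, fun h => hs.not_reach_compl h.symm⟩

theorem InnerQ.exists_isInnerSplit (hT : G.IsSpanningTree T) (hY : Y.Nonempty)
    (ha : G.InnerQ T Y a) : ∃ a₁ a₂, G.IsInnerSplit T Y a a₁ a₂ := by
  obtain ⟨-, f₁, hf₁, f₂, hf₂, hf₁₂, haf₁, haf₂⟩ := ha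
  obtain ⟨a₁, hf₁e⟩ := Sym2.mem_iff_exists.mp haf₁
  obtain ⟨a₂, hf₂e⟩ := Sym2.mem_iff_exists.mp haf₂
  have hf₁T := qedges_subset hY hf₁
  have hf₂T := qedges_subset hY hf₂
  have hcut : ∀ {f}, f ∈ G.Qedges T Y → ∀ y ∈ Y, ∀ x x', G.ends y = s(x, x') →
      ¬ G.Reach (T \ {f}) Set.univ x x' := fun hf y hy => (Set.mem_iInter₂.mp hf y hy).2
  -- a path from `a₁` to `a₂` avoiding `a` would close a cycle with `f₁` and `f₂`
  have hnot : ¬ G.Reach T {a}ᶜ a₁ a₂ := by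
    intro h
    have haa₂ : G.Adj (T \ {f₁}) Set.univ a a₂ := ⟨trivial, trivial, f₂, ⟨hf₂T, Ne.symm hf₁₂⟩, hf₂e⟩
    have ha₂a₁ : G.Reach (T \ {f₁}) Set.univ a₂ a₁ :=
      ((h.diff_singleton haf₁ (by simp)).mono subset_rfl (Set.subset_univ _)).symm
    exact hT.not_reach_diff hf₁T hf₁e (haa₂.reach.trans ha₂a₁)
  refine ⟨a₁, a₂, ⟨f₁, ⟨hf₁T, hf₁⟩, hf₁e⟩, ⟨f₂, ⟨hf₂T, hf₂⟩, hf₂e⟩, hnot, fun y hy x x' hxy => ?_⟩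
  rcases hT.reach_compl_of_not_reach_diff hf₁e (hcut hf₁ y hy x x' hxy) with h₁ | h₁ <;>
    rcases hT.reach_compl_of_not_reach_diff hf₂e (hcut hf₂ y hy x x' hxy) with h₂ | h₂
  · exact absurd (h₁.symm.trans h₂) hnot
  · exact .inl ⟨h₁, h₂⟩
  · exact .inr ⟨h₂, h₁⟩
  · exact absurd (h₁.symm.trans h₂) hnot

/-- Every edge of `G - a` can be rerouted in `G ∖ Y - a`: a `Y`-edge through the two sides of `a`
in `T` and a path from `a₁` to `a₂`. -/
theorem IsInnerSplit.not_reach_compl [Finite E] (hG : G.TutteConnected 2)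
    (hTY : T ⊆ Set.univ \ Y) (hs : G.IsInnerSplit T Y a a₁ a₂)
    (hart : G.ArticulationVertex (Set.univ \ Y) a) : ¬ G.Reach (Set.univ \ Y) {a}ᶜ a₁ a₂ := by
  intro h₁₂
  obtain ⟨p, q, hp, hq, hpq⟩ := hart
  have step : ∀ v w, G.Adj Set.univ {a}ᶜ v w → G.Reach (Set.univ \ Y) {a}ᶜ v w := by
    rintro v w ⟨hv, hw, e, -, hee⟩
    by_cases hy : e ∈ Y
    · have hTY' : ∀ {x c}, G.Reach T {a}ᶜ x c → G.Reach (Set.univ \ Y) {a}ᶜ x c :=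
        Reach.mono hTY subset_rfl
      rcases hs.sides e hy v w hee with ⟨hv₁, hw₂⟩ | ⟨hv₂, hw₁⟩
      · exact ((hTY' hv₁).trans h₁₂).trans (hTY' hw₂).symm
      · exact ((hTY' hv₂).trans h₁₂.symm).trans (hTY' hw₁).symm
    · exact Adj.reach ⟨hv, hw, e, ⟨trivial, hy⟩, hee⟩
  exact hpq (Relation.ReflTransGen.lift' id step p q (hG.reach_compl_singleton hp hq))

theorem IsInnerSplit.reach_or_reach (hs : G.IsInnerSplit T Y a a₁ a₂) (hY : Y.Nonempty)
    (hb : ∀ y ∈ Y, G.OnFundPath T y b) (hab : a ≠ b) :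
    G.Reach T {a}ᶜ b a₁ ∨ G.Reach T {a}ᶜ b a₂ := by
  by_contra! hno
  obtain ⟨y, hy⟩ := hY
  obtain ⟨x, x', hxy⟩ : ∃ x x', G.ends y = s(x, x') := Sym2.exists.mp ⟨_, rfl⟩
  obtain ⟨f₁, ⟨hf₁, -⟩, hf₁e⟩ := hs.edge₁
  obtain ⟨f₂, ⟨hf₂, -⟩, hf₂e⟩ := hs.edge₂
  have toward : ∀ z, G.Reach T {a}ᶜ z a₁ ∨ G.Reach T {a}ᶜ z a₂ →
      z ≠ b ∧ G.Reach T {b}ᶜ z a := by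
    rintro z (hz | hz)
    · exact ⟨by rintro rfl; exact hno.1 hz, hz.reach_compl_of_not_reach hno.1 hf₁ hf₁e hab⟩
    · exact ⟨by rintro rfl; exact hno.2 hz, hz.reach_compl_of_not_reach hno.2 hf₂ hf₂e hab⟩
  have hx := toward x ((hs.sides y hy x x' hxy).imp And.left And.left)
  have hx' := toward x' ((hs.sides y hy x x' hxy).symm.imp And.right And.right)
  rcases hb y hy x x' hxy with h | h | h
  exacts [hx.1 h.symm, hx'.1 h.symm, h (hx.2.trans hx'.2.symm)]

def between (G : Multigraph V E) (F : Set E) (a b : V) : Set V :=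
  {v | G.Reach F {a}ᶜ v b ∧ G.Reach F {b}ᶜ v a}

theorem between_comm : G.between F a b = G.between F b a :=
  Set.ext fun _ => and_comm

theorem left_notMem_between (hab : a ≠ b) : a ∉ G.between F a b :=
  fun h => h.1.symm.mem hab.symm rfl

theorem mem_between_of_adj (hab : a ≠ b) (he : e ∈ F) (hee : G.ends e = s(v, w))
    (hv : v ∈ G.between F a b) (hwa : w ≠ a) (hwb : w ≠ b) : w ∈ G.between F a b := by
  have hva : v ≠ a := by rintro rfl; exact left_notMem_between hab hv
  have hvb : v ≠ b := by rintro rfl; exact left_notMem_between hab.symm (between_comm ▸ hv)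
  exact ⟨(Adj.reach ⟨hwa, hva, e, he, hee.trans Sym2.eq_swap⟩).trans hv.1,
    (Adj.reach ⟨hwb, hvb, e, he, hee.trans Sym2.eq_swap⟩).trans hv.2⟩

theorem IsInnerSplit.mem_between (hs : G.IsInnerSplit T Y a a₁ a₂) (hTY : T ⊆ Set.univ \ Y)
    (hab : a ≠ b) (ha₂b : a₂ ≠ b) (hba : G.Reach T {a}ᶜ b a₂) :
    a₂ ∈ G.between (Set.univ \ Y) a b :=
  let ⟨f₂, ⟨hf₂, _⟩, hf₂e⟩ := hs.edge₂
  ⟨(hba.mono hTY subset_rfl).symm, Adj.reach ⟨ha₂b, hab, f₂, hTY hf₂, hf₂e.trans Sym2.eq_swap⟩⟩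

theorem IsArticulationSplit.notMem_between (ha : G.IsArticulationSplit T Y a a₁ a₂)
    (hTY : T ⊆ Set.univ \ Y) (hba : G.Reach T {a}ᶜ b a₂) : a₁ ∉ G.between (Set.univ \ Y) a b :=
  fun h => ha.not_reach_compl (h.1.trans (hba.mono hTY subset_rfl))

theorem IsArticulationSplit.sides_of_reach (ha : G.IsArticulationSplit T Y a a₁ a₂)
    (hTY : T ⊆ Set.univ \ Y) (hba : G.Reach T {a}ᶜ b a₂) (hy : y ∈ Y) (hxy : G.ends y = s(x, x'))
    (hx : G.Reach (Set.univ \ Y) {a}ᶜ x b) : G.Reach T {a}ᶜ x a₂ ∧ G.Reach T {a}ᶜ x' a₁ :=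
  (ha.sides y hy x x' hxy).resolve_left fun h =>
    ha.not_reach_compl (((h.1.mono hTY subset_rfl).symm.trans hx).trans (hba.mono hTY subset_rfl))

/-- Both ends of a `Y`-edge at `x` would reach `a` in `T - b`, although `b` lies on the tree path
between them. -/
theorem IsArticulationSplit.notMem_between_of_ends (ha : G.IsArticulationSplit T Y a a₁ a₂)
    (hb : G.IsArticulationSplit T Y b b₁ b₂) (hTY : T ⊆ Set.univ \ Y) (hab : a ≠ b)
    (hba : G.Reach T {a}ᶜ b a₂) (hab' : G.Reach T {b}ᶜ a b₁)
    (hOnB : ∀ y ∈ Y, G.OnFundPath T y b) (hy : y ∈ Y) (hxy : G.ends y = s(x, x')) :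
    x ∉ G.between (Set.univ \ Y) a b := by
  rintro ⟨hxa, hxb⟩
  obtain ⟨-, hx'₁⟩ := ha.sides_of_reach hTY hba hy hxy hxa
  obtain ⟨hx₁, -⟩ := hb.swap.sides_of_reach hTY hab' hy hxy hxb
  obtain ⟨f₁, ⟨hf₁, -⟩, hf₁e⟩ := ha.edge₁
  have hb₁ : ¬ G.Reach T {a}ᶜ b a₁ := fun h => ha.not_reach (h.symm.trans hba)
  rcases hOnB y hy x x' hxy with hbx | hbx' | hno
  · subst hbx
    exact left_notMem_between hab.symm ⟨hxb, hxa⟩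
  · subst hbx'
    exact hb₁ hx'₁
  · exact hno ((hx₁.trans hab'.symm).trans (hx'₁.reach_compl_of_not_reach hb₁ hf₁ hf₁e hab).symm)

theorem IsArticulationSplit.between_closed (ha : G.IsArticulationSplit T Y a a₁ a₂)
    (hb : G.IsArticulationSplit T Y b b₁ b₂) (hTY : T ⊆ Set.univ \ Y) (hab : a ≠ b)
    (hba : G.Reach T {a}ᶜ b a₂) (hab' : G.Reach T {b}ᶜ a b₁)
    (hOnB : ∀ y ∈ Y, G.OnFundPath T y b) (hee : G.ends e = s(v, w))
    (hv : v ∈ G.between (Set.univ \ Y) a b) : w ∈ G.between (Set.univ \ Y) a b ∪ {a, b} := by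
  by_cases hw : w = a ∨ w = b
  · exact .inr hw
  by_cases hy : e ∈ Y
  · exact absurd hv (ha.notMem_between_of_ends hb hTY hab hba hab' hOnB hy hee)
  · obtain ⟨hwa, hwb⟩ := not_or.mp hw
    exact .inl (mem_between_of_adj hab ⟨trivial, hy⟩ hee hv hwa hwb)

theorem exists_qedge_of_isArticulationSplit [Finite E] (hG : G.TutteConnected 3)
    (hTY : T ⊆ Set.univ \ Y) (hab : a ≠ b) (ha : G.IsArticulationSplit T Y a a₁ a₂)
    (hb : G.IsArticulationSplit T Y b b₁ b₂) (hba : G.Reach T {a}ᶜ b a₂)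
    (hab' : G.Reach T {b}ᶜ a b₁) (hOnB : ∀ y ∈ Y, G.OnFundPath T y b) :
    ∃ f ∈ G.Qedges T Y, G.ends f = s(a, b) := by
  by_contra hno
  obtain ⟨f₁, -, hf₁e⟩ := ha.edge₁
  obtain ⟨f₂, ⟨-, hf₂⟩, hf₂e⟩ := ha.edge₂
  obtain ⟨g₁, ⟨-, hg₁⟩, hg₁e⟩ := hb.edge₁
  obtain ⟨g₂, -, hg₂e⟩ := hb.edge₂
  have ha₂b : a₂ ≠ b := by rintro rfl; exact hno ⟨f₂, hf₂, hf₂e⟩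
  have hb₁a : b₁ ≠ a := by rintro rfl; exact hno ⟨g₁, hg₁, hg₁e.trans Sym2.eq_swap⟩
  have ha₁b : a₁ ≠ b := by rintro rfl; exact ha.not_reach hba
  set M := G.between (Set.univ \ Y) a b
  have hcomm : M = G.between (Set.univ \ Y) b a := between_comm
  have ha₂ : a₂ ∈ M := ha.mem_between hTY hab ha₂b hba
  have hb₁ : b₁ ∈ M := hcomm ▸ hb.swap.mem_between hTY hab.symm hb₁a hab'
  have ha₁ : a₁ ∉ M := ha.notMem_between hTY hba
  have hb₂ : b₂ ∉ M := hcomm ▸ hb.swap.notMem_between hTY hab'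
  have haM : a ∉ M := left_notMem_between hab
  have hbM : b ∉ M := hcomm ▸ left_notMem_between hab.symm
  have hf₂g₁ : f₂ ≠ g₁ := by
    rintro rfl
    rcases Sym2.eq_iff.mp (hf₂e.symm.trans hg₁e) with ⟨h, -⟩ | ⟨-, h⟩
    exacts [hab h, ha₂b h]
  have hf₁g₂ : f₁ ≠ g₂ := by
    rintro rfl
    rcases Sym2.eq_iff.mp (hf₁e.symm.trans hg₂e) with ⟨h, -⟩ | ⟨-, h⟩
    exacts [hab h, ha₁b h]
  refine hG.not_closed_separation
    (fun e v w hee hv => ha.between_closed hb hTY hab hba hab' hOnB hee hv) ?_ ?_ ?_ ?_ ?_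
  · rintro _ (rfl | rfl)
    · exact ⟨⟨f₂, mem_star hf₂e ha₂, hf₂e ▸ Sym2.mem_mk_left _ _⟩,
        ⟨f₁, notMem_star hf₁e haM ha₁, hf₁e ▸ Sym2.mem_mk_left _ _⟩⟩
    · exact ⟨⟨g₁, mem_star hg₁e hb₁, hg₁e ▸ Sym2.mem_mk_left _ _⟩,
        ⟨g₂, notMem_star hg₂e hbM hb₂, hg₂e ▸ Sym2.mem_mk_left _ _⟩⟩
  all_goals rw [Set.ncard_pair hab]
  · norm_num
  · norm_num
  · exact (Set.one_lt_ncard (Set.toFinite _)).mpr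
      ⟨f₂, mem_star hf₂e ha₂, g₁, mem_star hg₁e hb₁, hf₂g₁⟩
  · exact (Set.one_lt_ncard (Set.toFinite _)).mpr
      ⟨f₁, notMem_star hf₁e haM ha₁, g₂, notMem_star hg₂e hbM hb₂, hf₁g₂⟩

theorem InnerQ.exists_isArticulationSplit [Finite E] (hG : G.TutteConnected 2)
    (hT : G.IsSpanningTree T) (hTY : T ⊆ Set.univ \ Y) (hY : Y.Nonempty) (ha : G.InnerQ T Y a)
    (hart : G.ArticulationVertex (Set.univ \ Y) a) (hb : ∀ y ∈ Y, G.OnFundPath T y b)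
    (hab : a ≠ b) : ∃ a₁ a₂, G.IsArticulationSplit T Y a a₁ a₂ ∧ G.Reach T {a}ᶜ b a₂ := by
  obtain ⟨a₁, a₂, hs⟩ := ha.exists_isInnerSplit hT hY
  have hs' : G.IsArticulationSplit T Y a a₁ a₂ := ⟨hs, hs.not_reach_compl hG hTY hart⟩
  rcases hs.reach_or_reach hY hb hab with h | h
  exacts [⟨a₂, a₁, hs'.swap, h⟩, ⟨a₁, a₂, hs', h⟩]

end Multigraph

theorem inner_articulation_adjacent_general {V E : Type} [Fintype E]
    (G : Multigraph V E) (h3 : G.TutteConnected 3)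
    (T : Set E) (hT : G.IsSpanningTree T)
    (Y : Set E) (hYT : ∀ y ∈ Y, y ∉ T) (hYne : Y.Nonempty) :
    (∀ a b : V, a ≠ b → G.InnerQ T Y a → G.InnerQ T Y b →
      G.ArticulationVertex (Set.univ \ Y) a →
      G.ArticulationVertex (Set.univ \ Y) b →
      ∃ f ∈ G.Qedges T Y, G.ends f = s(a, b)) ∧
    {v : V | G.InnerQ T Y v ∧
      G.ArticulationVertex (Set.univ \ Y) v}.ncard ≤ 2 := by
  have hTY : T ⊆ Set.univ \ Y := fun e he => ⟨trivial, fun hy => hYT e hy he⟩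
  have adjacent : ∀ a b : V, a ≠ b → G.InnerQ T Y a → G.InnerQ T Y b →
      G.ArticulationVertex (Set.univ \ Y) a → G.ArticulationVertex (Set.univ \ Y) b →
      ∃ f ∈ G.Qedges T Y, G.ends f = s(a, b) := by
    intro a b hab ha hb hartA hartB
    obtain ⟨a₁, a₂, ha', hba⟩ :=
      ha.exists_isArticulationSplit (h3.mono (by norm_num)) hT hTY hYne hartA hb.1 hab
    obtain ⟨b₂, b₁, hb', hab'⟩ :=
      hb.exists_isArticulationSplit (h3.mono (by norm_num)) hT hTY hYne hartB ha.1 hab.symm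
    exact Multigraph.exists_qedge_of_isArticulationSplit h3 hTY hab ha' hb'.swap hba hab' hb.1
  refine ⟨adjacent, ?_⟩
  by_contra! hcard
  obtain ⟨x, y, z, hx, hy, hz, hxy, hxz, hyz⟩ :=
    (Set.two_lt_ncard_iff (Set.finite_of_ncard_pos (by omega))).mp hcard
  obtain ⟨f, hf, hfe⟩ := adjacent x y hxy hx.1 hy.1 hx.2 hy.2
  obtain ⟨g, hg, hge⟩ := adjacent y z hyz hy.1 hz.1 hy.2 hz.2
  obtain ⟨h, hh, hhe⟩ := adjacent x z hxz hx.1 hz.1 hx.2 hz.2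
  exact hT.not_triangle (Multigraph.qedges_subset hYne hf) (Multigraph.qedges_subset hYne hg)
    (Multigraph.qedges_subset hYne hh) hfe hge hhe hxy hyz

/-- In a 3-connected graph, any two inner vertices of
`Q = ⋂_{y∈Y} P_y(T)` that are articulation vertices of `G ∖ Y` are adjacent
on `Q`; in particular there are at most two such inner vertices. -/
theorem inner_articulation_adjacent {V E : Type} [Fintype V] [Fintype E]
    (G : Multigraph V E) (h3 : G.TutteConnected 3)
    (T : Set E) (hT : G.IsSpanningTree T)
    (Y : Set E) (hYT : ∀ y ∈ Y, y ∉ T) (hYne : Y.Nonempty) :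
    (∀ a b : V, a ≠ b → G.InnerQ T Y a → G.InnerQ T Y b →
      G.ArticulationVertex (Set.univ \ Y) a →
      G.ArticulationVertex (Set.univ \ Y) b →
      ∃ f ∈ G.Qedges T Y, G.ends f = s(a, b)) ∧
    {v : V | G.InnerQ T Y v ∧
      G.ArticulationVertex (Set.univ \ Y) v}.ncard ≤ 2 :=
  inner_articulation_adjacent_general G h3 T hT Y hYT hYne
end

section
/- Let G be a 2-connected multigraph with a 2-separation (E1,E2) with separating vertices {u,w}. For i = 1,2, let G_i be the graph on vertex set V(E_i) with edges E_i together with a new edge e_i = {u,w}, and let Y_i := Y ∩ E_i. Then for v ∈ {u,w}: v is Y-splittable in G if and only if v is Y_i-splittable in G_i for both i = 1 and i = 2. -/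
/-!
A `Y`-splitting of `v` is the same as a 2-colouring that is constant across the edges outside `Y`
and proper across the edges of `Y`, counting only edges that avoid `v`. The new edge `{u, w}` of
`Gᵢ` always meets `v`, so `v` is splittable in `Gᵢ` exactly when such a colouring exists on `Eᵢ`.
Restricting a colouring of `G` therefore splits `v` in both parts. Conversely, colourings of the
two parts can only disagree at the separating vertex other than `v`; after swapping the colours
of the second part they agree there as well and glue to a colouring of `G`.
-/

namespace Multigraph

variable {V E : Type} {G : Multigraph V E} {Y F F₁ F₂ : Set E} {u w v : V}

def IsSplitColouring (G : Multigraph V E) (Y : Set E) (v : V) (F : Set E) (c : V → Bool) :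
    Prop :=
  ∀ e ∈ F, ∀ a b : V, G.ends e = s(a, b) → a ≠ v → b ≠ v → (c a ≠ c b ↔ e ∈ Y)

theorem mem_verts_of_ends {e : E} {a b : V} (he : e ∈ F) (hab : G.ends e = s(a, b)) :
    a ∈ G.verts F ∧ b ∈ G.verts F :=
  ⟨⟨e, he, hab ▸ Sym2.mem_mk_left a b⟩, ⟨e, he, hab ▸ Sym2.mem_mk_right a b⟩⟩

theorem splittable_iff_exists_isSplitColouring :
    G.Splittable Y v ↔ ∃ c, G.IsSplitColouring Y v Set.univ c := by
  constructor
  · rintro ⟨c, hconst, hproper⟩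
    refine ⟨c, fun e _ a b hab ha hb => ⟨fun hne => ?_, fun hy => hproper e hy a b hab ha hb⟩⟩
    by_contra hy
    exact hne (hconst a b (.single ⟨ha, hb, e, ⟨trivial, hy⟩, hab⟩))
  · rintro ⟨c, hc⟩
    refine ⟨c, fun a b hreach => ?_, fun e hy a b hab ha hb => (hc e trivial a b hab ha hb).2 hy⟩
    induction hreach with
    | refl => rfl
    | tail _ hadj ih =>
      obtain ⟨ha, hb, e, ⟨-, hy⟩, hab⟩ := hadj
      exact ih.trans (not_not.mp (mt (hc e trivial _ _ hab ha hb).1 hy))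

theorem isSplitColouring_augment_iff (hv : v = u ∨ v = w) {c : V → Bool} :
    (G.augment F u w).IsSplitColouring (Sum.inl '' {e : ↥F | (e : E) ∈ Y}) v Set.univ c ↔
      G.IsSplitColouring Y v F c := by
  constructor
  · intro hc e he a b hab ha hb
    simpa using hc (Sum.inl ⟨e, he⟩) trivial a b hab ha hb
  · rintro hc (e | _) - a b hab ha hb
    · simpa using hc e e.2 a b hab ha hb
    · have hv' : v ∈ s(a, b) := (hab : s(u, w) = s(a, b)) ▸ hv.elim (· ▸ Sym2.mem_mk_left u w)
        (· ▸ Sym2.mem_mk_right u w)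
      exact (Sym2.mem_iff.mp hv').elim (fun h => absurd h.symm ha) (fun h => absurd h.symm hb)

theorem augment_splittable_iff (hv : v = u ∨ v = w) :
    (G.augment F u w).Splittable (Sum.inl '' {e : ↥F | (e : E) ∈ Y}) v ↔
      ∃ c, G.IsSplitColouring Y v F c := by
  simp only [splittable_iff_exists_isSplitColouring, isSplitColouring_augment_iff hv]

namespace IsSplitColouring

variable {c c₁ c₂ : V → Bool}

theorem mono (hc : G.IsSplitColouring Y v F c) (hF : F₁ ⊆ F) : G.IsSplitColouring Y v F₁ c :=
  fun e he => hc e (hF he)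

theorem xor_const (hc : G.IsSplitColouring Y v F c) (δ : Bool) :
    G.IsSplitColouring Y v F (fun a => c a ^^ δ) := by
  intro e he a b hab ha hb
  simpa only [ne_eq, Bool.xor_left_inj] using hc e he a b hab ha hb

theorem piecewise (hc₁ : G.IsSplitColouring Y v F₁ c₁) (hc₂ : G.IsSplitColouring Y v F₂ c₂)
    (hagree : ∀ a ∈ G.verts F₁ ∩ G.verts F₂, a ≠ v → c₁ a = c₂ a) :
    ∃ c, G.IsSplitColouring Y v (F₁ ∪ F₂) c := by
  classical
  set c : V → Bool := fun a => if a ∈ G.verts F₁ then c₁ a else c₂ a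
  have hc_eq₂ : ∀ a ∈ G.verts F₂, a ≠ v → c a = c₂ a := by
    intro a ha₂ hav
    by_cases ha₁ : a ∈ G.verts F₁
    · simp only [c, if_pos ha₁, hagree a ⟨ha₁, ha₂⟩ hav]
    · simp only [c, if_neg ha₁]
  refine ⟨c, ?_⟩
  rintro e (he | he) a b hab ha hb
  · obtain ⟨ha₁, hb₁⟩ := mem_verts_of_ends he hab
    simpa only [c, if_pos ha₁, if_pos hb₁] using hc₁ e he a b hab ha hb
  · obtain ⟨ha₂, hb₂⟩ := mem_verts_of_ends he hab
    rw [hc_eq₂ a ha₂ ha, hc_eq₂ b hb₂ hb]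
    exact hc₂ e he a b hab ha hb

theorem union_of_inter_subset_pair {x : V} (hc₁ : G.IsSplitColouring Y v F₁ c₁)
    (hc₂ : G.IsSplitColouring Y v F₂ c₂) (hinter : G.verts F₁ ∩ G.verts F₂ ⊆ {v, x}) :
    ∃ c, G.IsSplitColouring Y v (F₁ ∪ F₂) c := by
  refine hc₁.piecewise (hc₂.xor_const (c₂ x ^^ c₁ x)) fun a ha hav => ?_
  obtain rfl : a = x := (hinter ha).resolve_left hav
  simp

end IsSplitColouring

end Multigraph

theorem shared_splittable_combine_general {V E : Type}
    (G : Multigraph V E)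
    (E1 E2 : Set E) (u w : V) (hsep : G.IsTwoSep E1 E2 u w)
    (Y : Set E)
    (v : V) (hv : v = u ∨ v = w) :
    G.Splittable Y v ↔
      ((G.augment E1 u w).Splittable
          (Sum.inl '' {e : ↥E1 | (e : E) ∈ Y} : Set (↥E1 ⊕ Unit)) v ∧
       (G.augment E2 u w).Splittable
          (Sum.inl '' {e : ↥E2 | (e : E) ∈ Y} : Set (↥E2 ⊕ Unit)) v) := by
  obtain ⟨hunion, -, -, -, -, hinter⟩ := hsep
  rw [Multigraph.splittable_iff_exists_isSplitColouring, Multigraph.augment_splittable_iff hv,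
    Multigraph.augment_splittable_iff hv]
  constructor
  · rintro ⟨c, hc⟩
    exact ⟨⟨c, hc.mono (Set.subset_univ E1)⟩, ⟨c, hc.mono (Set.subset_univ E2)⟩⟩
  · rintro ⟨⟨c₁, hc₁⟩, ⟨c₂, hc₂⟩⟩
    obtain ⟨x, hx⟩ : ∃ x, G.verts E1 ∩ G.verts E2 ⊆ {v, x} := by
      rcases hv with rfl | rfl
      · exact ⟨w, hinter.le⟩
      · exact ⟨u, by rw [hinter, Set.pair_comm]⟩
    rw [← hunion]
    exact hc₁.union_of_inter_subset_pair hc₂ hx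

/-- Splittability of a separating vertex of a 2-separation decomposes:
`v ∈ {u, w}` is `Y`-splittable in `G` iff `v` is `Y ∩ Eᵢ`-splittable in each
graph `Gᵢ` obtained from `Eᵢ` by adding a new edge `{u, w}`. -/
theorem shared_splittable_combine {V E : Type} [Fintype V] [Fintype E]
    (G : Multigraph V E) (h2 : G.TutteConnected 2)
    (E1 E2 : Set E) (u w : V) (hsep : G.IsTwoSep E1 E2 u w)
    (T : Set E) (hT : G.IsSpanningTree T)
    (Y : Set E) (hYT : ∀ y ∈ Y, y ∉ T)
    (v : V) (hv : v = u ∨ v = w) :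
    G.Splittable Y v ↔
      ((G.augment E1 u w).Splittable
          (Sum.inl '' {e : ↥E1 | (e : E) ∈ Y} : Set (↥E1 ⊕ Unit)) v ∧
       (G.augment E2 u w).Splittable
          (Sum.inl '' {e : ↥E2 | (e : E) ∈ Y} : Set (↥E2 ⊕ Unit)) v) :=
  shared_splittable_combine_general G E1 E2 u w hsep Y v hv
end
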